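/- arXiv:2605.09251 — 4 statements merged into one kernel-verified Lean document; each statement's English description precedes it below -/
import Mathlib

section
/- Let φ : ℂ → ℂ be an entire function satisfying: (1) there is ε ∈ {1, −1} with φ(−s) = ε·φ(s) for all s ∈ ℂ; (2) there is s₀ ∈ ℝ such that φ(s) is a positive real number for every real s ≥ s₀; (3) φ has order at most 1, i.e. for every ρ > 1 there is C > 0 with ‖φ(s)‖ ≤ C·exp(‖s‖^ρ) for all s ∈ ℂ; (4) every zero of φ lies on the imaginary axis, i.e. φ(s) = 0 implies Re(s) = 0. Then for every integer l ≥ 0 the l-th derivative φ^{(l)}(0) is a nonnegative real number, i.e. Im(φ^{(l)}(0)) = 0 and Re(φ^{(l)}(0)) ≥ 0. -/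
open Complex Metric Set Filter Topology Polynomial intervalIntegral MeasureTheory

namespace YZ


/-- Two continuous functions agreeing on a punctured neighborhood agree at the point. -/
lemma eq_of_punctured {f g : ℂ → ℂ} {c : ℂ} (hf : ContinuousAt f c) (hg : ContinuousAt g c)
    (h : ∀ᶠ w in 𝓝[≠] c, f w = g w) : f c = g c := by
  have h1 : Tendsto f (𝓝[≠] c) (𝓝 (f c)) := hf.continuousWithinAt.tendsto
  have h2 : Tendsto g (𝓝[≠] c) (𝓝 (g c)) := hg.continuousWithinAt.tendsto
  exact tendsto_nhds_unique (h1.congr' h) h2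

lemma eq_of_eq_off_pair {f g : ℂ → ℂ} (hf : Continuous f) (hg : Continuous g) {a b : ℂ}
    (h : ∀ z, z ≠ a → z ≠ b → f z = g z) : ∀ z, f z = g z := by
  have key : ∀ z : ℂ, ∀ᶠ w in 𝓝[≠] z, f w = g w := by
    intro z
    have ha : ∀ᶠ w in 𝓝[≠] z, w ≠ a := by
      rcases eq_or_ne z a with rfl | hz
      · exact eventually_mem_nhdsWithin.mono fun w hw => hw
      · exact ((isOpen_compl_singleton.eventually_mem hz).filter_mono nhdsWithin_le_nhds)
    have hb : ∀ᶠ w in 𝓝[≠] z, w ≠ b := by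
      rcases eq_or_ne z b with rfl | hz
      · exact eventually_mem_nhdsWithin.mono fun w hw => hw
      · exact ((isOpen_compl_singleton.eventually_mem hz).filter_mono nhdsWithin_le_nhds)
    filter_upwards [ha, hb] with w hwa hwb using h w hwa hwb
  intro z
  exact eq_of_punctured hf.continuousAt hg.continuousAt (key z)

/-- an entire function which is somewhere nonzero is not eventually zero anywhere -/
lemma not_eventually_zero {f : ℂ → ℂ} (hf : Differentiable ℂ f) {z₁ : ℂ} (hnz : f z₁ ≠ 0)
    (w : ℂ) : ¬ (∀ᶠ z in 𝓝 w, f z = 0) := by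
  intro h
  have hA : AnalyticOnNhd ℂ f univ := fun z _ => hf.analyticAt z
  have := hA.eqOn_zero_of_preconnected_of_eventuallyEq_zero isPreconnected_univ (mem_univ w) h
  exact hnz (this (mem_univ z₁))

/-- Division of an entire function by a zero. -/
lemma factor_one {f : ℂ → ℂ} (hf : Differentiable ℂ f) (w : ℂ) :
    Differentiable ℂ (dslope f w) ∧ (f w = 0 → ∀ z, f z = (z - w) * dslope f w z) := by
  constructor
  · intro z
    rcases eq_or_ne z w with rfl | hz
    · obtain ⟨p, hp⟩ := hf.analyticAt z
      exact hp.has_fpower_series_dslope_fslope.analyticAt.differentiableAt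
    · exact (differentiableAt_dslope_of_ne hz).mpr (hf z)
  · intro hw z
    have := sub_smul_dslope f w z
    rw [smul_eq_mul, hw, sub_zero] at this
    exact this.symm

/-- Strip the full multiplicity of a zero of an entire function. -/
lemma strip {f : ℂ → ℂ} (hf : Differentiable ℂ f) {z₁ : ℂ} (hnz : f z₁ ≠ 0) (w : ℂ) :
    ∃ (m : ℕ) (k : ℂ → ℂ), Differentiable ℂ k ∧ k w ≠ 0 ∧ (∀ z, f z = (z - w) ^ m * k z) ∧
      (f w = 0 → 1 ≤ m) := by
  have hord : ∃ n : ℕ, analyticOrderAt f w = n := by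
    rcases eq_or_ne (analyticOrderAt f w) ⊤ with h | h
    · exact absurd (analyticOrderAt_eq_top.mp h) (not_eventually_zero hf hnz w)
    · lift analyticOrderAt f w to ℕ using h with n hn
      exact ⟨n, rfl⟩
  obtain ⟨n, hn⟩ := hord
  induction n generalizing f with
  | zero =>
      obtain ⟨g, _, hg0, hfg⟩ := ((hf.analyticAt w).analyticOrderAt_eq_natCast (n := 0)).mp hn
      have hfw : f w ≠ 0 := by
        have h := hfg.self_of_nhds
        simp only [sub_self, pow_zero, one_smul] at h
        rw [h]; exact hg0
      exact ⟨0, f, hf, hfw, fun z => by ring, fun h => absurd h hfw⟩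
  | succ n ih =>
      obtain ⟨g, hga, hg0, hfg⟩ := ((hf.analyticAt w).analyticOrderAt_eq_natCast (n := n+1)).mp hn
      have hfw : f w = 0 := by
        have h := hfg.self_of_nhds
        simpa using h
      obtain ⟨hd, hid⟩ := factor_one hf w
      have hid' := hid hfw
      set d := dslope f w with hdd
      -- d has order n at w
      have hdz₁ : d z₁ ≠ 0 ∧ z₁ ≠ w := by
        constructor
        · intro h0; exact hnz (by rw [hid' z₁, h0, mul_zero])
        · intro h; exact hnz (h ▸ hfw)
      have hdg : ∀ᶠ z in 𝓝 w, d z = (z - w) ^ n * g z := by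
        have hcd : ContinuousAt d w := (hd w).continuousAt
        have hcg : ContinuousAt (fun z => (z - w) ^ n * g z) w :=
          (ContinuousAt.pow (by fun_prop) n).mul hga.continuousAt
        have hpunct : ∀ᶠ z in 𝓝[≠] w, d z = (z - w) ^ n * g z := by
          have : ∀ᶠ z in 𝓝[≠] w, f z = (z - w) ^ (n+1) • g z :=
            hfg.filter_mono nhdsWithin_le_nhds
          filter_upwards [this, eventually_mem_nhdsWithin] with z hz hzw
          have hzw' : z - w ≠ 0 := sub_ne_zero.mpr hzw
          have h1 : (z - w) * d z = (z - w) * ((z - w) ^ n * g z) := by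
            rw [← hid' z, hz, smul_eq_mul]; ring
          exact mul_left_cancel₀ hzw' h1
        -- upgrade to full neighborhood
        have hat : d w = (fun z => (z - w) ^ n * g z) w :=
          eq_of_punctured hcd hcg hpunct
        rw [eventually_nhdsWithin_iff] at hpunct
        filter_upwards [hpunct] with z hz
        rcases eq_or_ne z w with rfl | hzw
        · exact hat
        · exact hz (by simpa using hzw)
      have hdn : (analyticOrderAt d w) = (n : ℕ∞) := by
        rw [(hd.analyticAt w).analyticOrderAt_eq_natCast]
        exact ⟨g, hga, hg0, by filter_upwards [hdg] with z hz using by rw [hz, smul_eq_mul]⟩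
      obtain ⟨m, k, hk, hk0, hfk, _⟩ := ih hd hdz₁.1 hdn
      refine ⟨m + 1, k, hk, hk0, fun z => ?_, fun _ => Nat.succ_le_succ (Nat.zero_le m)⟩
      rw [hid' z, hfk z]; ring
  


noncomputable def qprod (M : Multiset ℝ) (z : ℂ) : ℂ := (M.map (fun t : ℝ => z^2 + (t:ℂ))).prod

lemma qprod_cons (t : ℝ) (M : Multiset ℝ) (z : ℂ) :
    qprod (t ::ₘ M) z = (z^2 + (t:ℂ)) * qprod M z := by
  simp [qprod]

lemma deriv_entire {f : ℂ → ℂ} (hf : Differentiable ℂ f) : Differentiable ℂ (deriv f) := by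
  intro z
  have hA : AnalyticOnNhd ℂ f univ := fun w _ => hf.analyticAt w
  exact (hA.deriv z (mem_univ z)).differentiableAt

lemma iteratedDeriv_entire {f : ℂ → ℂ} (hf : Differentiable ℂ f) (k : ℕ) :
    Differentiable ℂ (iteratedDeriv k f) := by
  induction k generalizing f with
  | zero => simpa [iteratedDeriv_zero] using hf
  | succ k ih =>
      rw [iteratedDeriv_succ']
      exact ih (deriv_entire hf)

lemma iteratedDeriv_div_const {f : ℂ → ℂ} (hf : Differentiable ℂ f) (c : ℂ) (k : ℕ) :
    ∀ x, iteratedDeriv k (fun z => f z / c) x = iteratedDeriv k f x / c := by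
  induction k generalizing f with
  | zero => intro x; simp
  | succ k ih =>
      intro x
      rw [iteratedDeriv_succ', iteratedDeriv_succ']
      have h1 : (deriv fun z => f z / c) = fun z => deriv f z / c := by
        funext z
        exact deriv_div_const _
      rw [h1]
      exact ih (deriv_entire hf) x

lemma mprod_pos {M : Multiset ℝ} (h : ∀ t ∈ M, 0 < t) : 0 < M.prod := by
  induction M using Multiset.induction with
  | empty => simp
  | cons t M ih =>
      rw [Multiset.prod_cons]
      exact mul_pos (h t (Multiset.mem_cons_self t M))
        (ih fun s hs => h s (Multiset.mem_cons_of_mem hs))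

lemma qprod_lower {M : Multiset ℝ} {z : ℂ} (h : ∀ t ∈ M, 0 < t ∧ 2 * t ≤ ‖z‖^2) :
    (M.prod : ℝ) ≤ ‖qprod M z‖ := by
  induction M using Multiset.induction with
  | empty => simp [qprod]
  | cons t M ih =>
      rw [Multiset.prod_cons, qprod_cons, norm_mul]
      obtain ⟨ht, htz⟩ := h t (Multiset.mem_cons_self t M)
      have hM : ∀ s ∈ M, 0 < s ∧ 2 * s ≤ ‖z‖^2 := fun s hs => h s (Multiset.mem_cons_of_mem hs)
      have h1 : t ≤ ‖z^2 + (t:ℂ)‖ := by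
        have h6 := norm_sub_norm_le (-(z^2)) ((t:ℂ))
        have h7 : -(z^2) - (t:ℂ) = -(z^2 + (t:ℂ)) := by ring
        have h4 : ‖((t:ℝ):ℂ)‖ = t := by
          rw [Complex.norm_real, Real.norm_eq_abs, _root_.abs_of_pos ht]
        rw [h7] at h6
        rw [norm_neg] at h6
        rw [norm_neg] at h6
        rw [norm_pow] at h6
        rw [h4] at h6
        linarith
      have hMprod : (0:ℝ) < M.prod := mprod_pos (fun s hs => (hM s hs).1)
      calc t * M.prod ≤ ‖z^2 + (t:ℂ)‖ * M.prod :=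
            mul_le_mul_of_nonneg_right h1 hMprod.le
        _ ≤ ‖z^2 + (t:ℂ)‖ * ‖qprod M z‖ :=
            mul_le_mul_of_nonneg_left (ih hM) (norm_nonneg _)

noncomputable def qpoly (M : Multiset ℝ) : Polynomial ℂ :=
  (M.map (fun t : ℝ => Polynomial.X^2 + Polynomial.C (t:ℂ))).prod

lemma qpoly_eval (M : Multiset ℝ) (z : ℂ) : (qpoly M).eval z = qprod M z := by
  induction M using Multiset.induction with
  | empty => simp [qpoly, qprod]
  | cons t M ih =>
      rw [qprod_cons, qpoly]
      rw [Multiset.map_cons, Multiset.prod_cons, Polynomial.eval_mul]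
      rw [← qpoly, ih]
      simp

/-- "nonnegative real coefficients" predicate -/
def NN (p : Polynomial ℂ) : Prop := ∀ k, (p.coeff k).im = 0 ∧ 0 ≤ (p.coeff k).re

lemma NN_mul {p q : Polynomial ℂ} (hp : NN p) (hq : NN q) : NN (p * q) := by
  intro k
  rw [Polynomial.coeff_mul]
  constructor
  · rw [Complex.im_sum]
    apply Finset.sum_eq_zero
    intro x hx
    rw [Complex.mul_im, (hp x.1).1, (hq x.2).1]
    ring
  · rw [Complex.re_sum]
    apply Finset.sum_nonneg
    intro x hx
    rw [Complex.mul_re, (hp x.1).1, (hq x.2).1]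
    have := mul_nonneg (hp x.1).2 (hq x.2).2
    simpa using this
lemma NN_one : NN 1 := by
  intro k
  rcases eq_or_ne k 0 with rfl | hk
  · simp
  · simp [Polynomial.coeff_one, hk]

lemma NN_qpoly {M : Multiset ℝ} (h : ∀ t ∈ M, 0 < t) : NN (qpoly M) := by
  induction M using Multiset.induction with
  | empty => simpa [qpoly] using NN_one
  | cons t M ih =>
      rw [qpoly, Multiset.map_cons, Multiset.prod_cons, ← qpoly]
      apply NN_mul _ (ih fun s hs => h s (Multiset.mem_cons_of_mem hs))
      intro k
      have ht := h t (Multiset.mem_cons_self t M)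
      rw [Polynomial.coeff_add, Polynomial.coeff_X_pow, Polynomial.coeff_C]
      refine ⟨?_, ?_⟩ <;> split_ifs <;>
        simp_all [Complex.add_im, Complex.add_re, Complex.ofReal_im, Complex.ofReal_re] <;>
        linarith
lemma iteratedDeriv_polyeval (k : ℕ) : ∀ (p : Polynomial ℂ),
    iteratedDeriv k (fun z => p.eval z) 0 = (k.factorial : ℂ) * p.coeff k := by
  induction k with
  | zero =>
      intro p
      rw [iteratedDeriv_zero]
      show p.eval 0 = ((Nat.factorial 0 : ℕ) : ℂ) * p.coeff 0
      rw [← Polynomial.coeff_zero_eq_eval_zero]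
      simp
  | succ k ih =>
      intro p
      rw [iteratedDeriv_succ']
      have h1 : (deriv fun z => p.eval z) = fun z => p.derivative.eval z := by
        funext z; rw [Polynomial.deriv]
      rw [h1, ih p.derivative, Polynomial.coeff_derivative]
      rw [Nat.factorial_succ]
      push_cast
      ring

lemma tendsto_iteratedDeriv_at_zero {F : ℕ → ℂ → ℂ} {f : ℂ → ℂ}
    (hF : ∀ n, Differentiable ℂ (F n)) (hf : Differentiable ℂ f)
    (h : TendstoLocallyUniformlyOn F f atTop (ball (0:ℂ) 1)) (k : ℕ) :
    Tendsto (fun n => iteratedDeriv k (F n) 0) atTop (𝓝 (iteratedDeriv k f 0)) := by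
  have key : TendstoLocallyUniformlyOn (fun n => iteratedDeriv k (F n)) (iteratedDeriv k f)
      atTop (ball (0:ℂ) 1) := by
    induction k with
    | zero => simpa [iteratedDeriv_zero] using h
    | succ k ih =>
        have h2 := ih.deriv (Filter.Eventually.of_forall fun n =>
          ((iteratedDeriv_entire (hF n) k).differentiableOn)) isOpen_ball
        simp only [iteratedDeriv_succ]
        exact h2
  exact key.tendsto_at (mem_ball_self one_pos)


lemma qprod_add (M N : Multiset ℝ) (z : ℂ) : qprod (M + N) z = qprod M z * qprod N z := by
  simp [qprod, Multiset.map_add, Multiset.prod_add]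

lemma qprod_replicate (m : ℕ) (t : ℝ) (z : ℂ) : qprod (Multiset.replicate m t) z = (z^2 + (t:ℂ)) ^ m := by
  simp [qprod, Multiset.map_replicate, Multiset.prod_replicate]

lemma qprod_zero (z : ℂ) : qprod 0 z = 1 := by simp [qprod]

lemma merge {g k k' : ℂ → ℂ} (hg : Differentiable ℂ g) (hk : Differentiable ℂ k)
    (hk' : Differentiable ℂ k') {a b : ℂ} (hab : a ≠ b) {m m' : ℕ}
    (h1 : ∀ z, g z = (z - a) ^ m * k z) (hka : k a ≠ 0)
    (h2 : ∀ z, g z = (z - b) ^ m' * k' z) (hkb : k' b ≠ 0) :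
    ∃ j : ℂ → ℂ, Differentiable ℂ j ∧ (∀ z, g z = (z - a) ^ m * (z - b) ^ m' * j z) ∧
      j a ≠ 0 ∧ j b ≠ 0 := by
  obtain ⟨m₂, j, hj, hjb, hkj, -⟩ := strip hk hka b
  have hja : j a ≠ 0 := by
    intro h0; apply hka; rw [hkj a, h0, mul_zero]
  have hgj : ∀ z, g z = (z - a) ^ m * (z - b) ^ m₂ * j z := by
    intro z; rw [h1 z, hkj z]; ring
  have hm : m₂ = m' := by
    rcases lt_trichotomy m₂ m' with h | h | h
    · exfalso
      obtain ⟨e, he⟩ : ∃ e, m' = m₂ + (e + 1) := ⟨m' - m₂ - 1, by omega⟩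
      have key : ∀ z, (z - a) ^ m * j z = (z - b) ^ (e+1) * k' z := by
        apply eq_of_eq_off_pair (by have := hj.continuous; fun_prop) (by have := hk'.continuous; fun_prop) (a := b) (b := b)
        intro z hzb _
        have hzb' : (z - b) ^ m₂ ≠ 0 := pow_ne_zero _ (sub_ne_zero.mpr hzb)
        apply mul_left_cancel₀ hzb'
        have h3 := (hgj z).symm.trans (h2 z)
        rw [he, pow_add] at h3
        linear_combination h3
      have := key b
      simp only [sub_self, zero_pow (Nat.succ_ne_zero e), zero_mul] at this
      exact (mul_ne_zero (pow_ne_zero _ (sub_ne_zero.mpr (Ne.symm hab))) hjb) this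
    · exact h
    · exfalso
      obtain ⟨e, he⟩ : ∃ e, m₂ = m' + (e + 1) := ⟨m₂ - m' - 1, by omega⟩
      have key : ∀ z, (z - a) ^ m * (z - b) ^ (e+1) * j z = k' z := by
        apply eq_of_eq_off_pair (by have := hj.continuous; fun_prop) (by have := hk'.continuous; fun_prop) (a := b) (b := b)
        intro z hzb _
        have hzb' : (z - b) ^ m' ≠ 0 := pow_ne_zero _ (sub_ne_zero.mpr hzb)
        apply mul_left_cancel₀ hzb'
        have h3 := (hgj z).symm.trans (h2 z)
        rw [he, pow_add] at h3
        linear_combination h3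
      have := key b
      simp only [sub_self, zero_pow (Nat.succ_ne_zero e), zero_mul, mul_zero] at this
      exact hkb this.symm
  exact ⟨j, hj, fun z => by rw [hgj z, hm], hja, hjb⟩

lemma pair_strip {g : ℂ → ℂ} (hg : Differentiable ℂ g) (heven : ∀ z, g (-z) = g z)
    {z₁ : ℂ} (hnz : g z₁ ≠ 0) {w : ℂ} (hw0 : w ≠ 0) (hgw : g w = 0) :
    ∃ (m : ℕ) (j : ℂ → ℂ), 1 ≤ m ∧ Differentiable ℂ j ∧ (∀ z, j (-z) = j z) ∧
      (∀ z, g z = (z^2 - w^2) ^ m * j z) ∧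
      (∀ z, j z = 0 ↔ (g z = 0 ∧ z ≠ w ∧ z ≠ -w)) := by
  obtain ⟨m, k, hk, hkw, hgk, hm1⟩ := strip hg hnz w
  have hm := hm1 hgw
  set kt : ℂ → ℂ := fun z => (-1) ^ m * k (-z) with hkt
  have hktd : Differentiable ℂ kt := by
    apply Differentiable.const_mul
    exact hk.comp (differentiable_neg)
  have hgkt : ∀ z, g z = (z - (-w)) ^ m * kt z := by
    intro z
    have h4 := hgk (-z)
    rw [heven z] at h4
    have hneg : (-z - w) ^ m = (-1:ℂ) ^ m * (z - -w) ^ m := by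
      rw [← mul_pow]; ring_nf
    rw [h4, hneg, hkt]; ring
  have hktw : kt (-w) ≠ 0 := by
    simp only [hkt, neg_neg]
    exact mul_ne_zero (pow_ne_zero _ (by norm_num)) hkw
  have haw : w ≠ -w := fun h => hw0 (by linear_combination h / 2)
  obtain ⟨j, hj, hgj, hjw, hjw'⟩ := merge hg hk hktd haw hgk hkw hgkt hktw
  have hgj2 : ∀ z, g z = (z^2 - w^2) ^ m * j z := by
    intro z
    rw [hgj z, ← mul_pow]
    ring_nf
  have heq : ∀ z, z ≠ w → z ≠ -w → (z^2 - w^2) ≠ 0 := by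
    intro z h1 h2
    have : z^2 - w^2 = (z - w) * (z + w) := by ring
    rw [this]
    exact mul_ne_zero (sub_ne_zero.mpr h1) (fun h => h2 (by linear_combination h))
  have hjeven : ∀ z, j (-z) = j z := by
    apply eq_of_eq_off_pair (f := fun z => j (-z)) (by have := hj.continuous; fun_prop) hj.continuous (a := w) (b := -w)
    intro z hzw hzw'
    show j (-z) = j z
    have hnz2 : ((z:ℂ)^2 - w^2) ^ m ≠ 0 := pow_ne_zero _ (heq z hzw hzw')
    have e1 := hgj2 (-z)
    rw [heven z] at e1
    have h5 : ((-z:ℂ))^2 - w^2 = z^2 - w^2 := by ring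
    rw [h5] at e1
    exact mul_left_cancel₀ hnz2 (e1.symm.trans (hgj2 z))
  refine ⟨m, j, hm, hj, hjeven, hgj2, fun z => ?_⟩
  constructor
  · intro h0
    have hzw : z ≠ w := fun h => hjw (h ▸ h0)
    have hzw' : z ≠ -w := fun h => hjw' (h ▸ h0)
    exact ⟨by rw [hgj2 z, h0, mul_zero], hzw, hzw'⟩
  · rintro ⟨hz0, hzw, hzw'⟩
    have := hgj2 z
    rw [hz0] at this
    have hnz2 : ((z:ℂ)^2 - w^2) ^ m ≠ 0 := pow_ne_zero _ (heq z hzw hzw')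
    field_simp at this
    exact (mul_eq_zero.mp this.symm).resolve_left hnz2

lemma zeros_finite {g : ℂ → ℂ} (hg : Differentiable ℂ g) {z₁ : ℂ} (hnz : g z₁ ≠ 0) (R : ℝ) :
    {z : ℂ | z ∈ closedBall (0:ℂ) R ∧ g z = 0}.Finite := by
  by_contra h
  have hinf : {z : ℂ | z ∈ closedBall (0:ℂ) R ∧ g z = 0}.Infinite := h
  obtain ⟨x, -, hx⟩ := hinf.exists_accPt_of_subset_isCompact (isCompact_closedBall (0:ℂ) R)
    (fun z hz => hz.1)
  rw [accPt_iff_frequently] at hx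
  have hfreq : ∃ᶠ z in 𝓝[≠] x, g z = 0 := by
    rw [frequently_nhdsWithin_iff]
    exact hx.mono (fun z hz => ⟨hz.2.2, hz.1⟩)
  have := (hg.analyticAt x).frequently_zero_iff_eventually_zero.mp hfreq
  exact not_eventually_zero hg hnz x this

lemma ball_factor (N : ℕ) : ∀ (g : ℂ → ℂ), Differentiable ℂ g → (∀ z, g (-z) = g z) →
    ∀ (hz : ∀ z, g z = 0 → z.re = 0 ∧ z ≠ 0) (R : ℝ)
    (hfin : {z : ℂ | z ∈ closedBall (0:ℂ) R ∧ g z = 0}.Finite)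
    (hcard : hfin.toFinset.card ≤ N),
    ∃ (M : Multiset ℝ) (G : ℂ → ℂ), Differentiable ℂ G ∧ (∀ z, G (-z) = G z) ∧
      (∀ t ∈ M, 0 < t ∧ t ≤ R^2) ∧
      (∀ z, g z = qprod M z * G z) ∧
      (∀ z ∈ closedBall (0:ℂ) R, G z ≠ 0) := by
  induction N with
  | zero =>
      intro g hg he hz R hfin hcard
      refine ⟨0, g, hg, he, by simp, fun z => by rw [qprod_zero, one_mul], fun z hzB => ?_⟩
      intro h0
      have : z ∈ hfin.toFinset := by rw [Set.Finite.mem_toFinset]; exact ⟨hzB, h0⟩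
      have := Finset.card_pos.mpr ⟨z, this⟩
      omega
  | succ N ih =>
      intro g hg he hz R hfin hcard
      by_cases hzero : ∀ z ∈ closedBall (0:ℂ) R, g z ≠ 0
      · exact ⟨0, g, hg, he, by simp, fun z => by rw [qprod_zero, one_mul], hzero⟩
      push_neg at hzero
      obtain ⟨w, hwB, hgw⟩ := hzero
      obtain ⟨hwre, hw0⟩ := hz w hgw
      have hg0 : g 0 ≠ 0 := fun h => (hz 0 h).2 rfl
      obtain ⟨m, j, hm1, hj, hje, hgj, hjz⟩ := pair_strip hg he hg0 hw0 hgw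
      -- t value
      have hw2 : w ^ 2 = -((w.im : ℂ) ^ 2) := by
        have hw : w = (w.im : ℂ) * I := by
          rw [← re_add_im w, hwre]; simp
        conv_lhs => rw [hw]
        rw [mul_pow, I_sq]; ring
      have htpos : 0 < w.im ^ 2 := by
        have him : w.im ≠ 0 := by
          intro h
          exact hw0 (Complex.ext (by simp [hwre]) (by simp [h]))
        positivity
      -- zeros of j
      have hzj : ∀ z, j z = 0 → z.re = 0 ∧ z ≠ 0 := by
        intro z h0
        exact hz z ((hjz z).mp h0).1
      have hfinj : {z : ℂ | z ∈ closedBall (0:ℂ) R ∧ j z = 0}.Finite := by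
        have hj0 : j 0 ≠ 0 := fun h => (hzj 0 h).2 rfl
        exact zeros_finite hj hj0 R
      have hcardj : hfinj.toFinset.card ≤ N := by
        have hsub : hfinj.toFinset ⊆ hfin.toFinset.erase w := by
          intro z hzmem
          rw [Set.Finite.mem_toFinset] at hzmem
          obtain ⟨hzB, hz0⟩ := hzmem
          obtain ⟨hgz0, hzw, hzw'⟩ := (hjz z).mp hz0
          rw [Finset.mem_erase, Set.Finite.mem_toFinset]
          exact ⟨hzw, hzB, hgz0⟩
        calc hfinj.toFinset.card ≤ (hfin.toFinset.erase w).card := Finset.card_le_card hsub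
          _ = hfin.toFinset.card - 1 := by
              rw [Finset.card_erase_of_mem]
              rw [Set.Finite.mem_toFinset]; exact ⟨hwB, hgw⟩
          _ ≤ N := by omega
      obtain ⟨M, G, hG, hGe, hMpos, hGid, hGz⟩ := ih j hj hje hzj R hfinj hcardj
      have htle : w.im ^ 2 ≤ R ^ 2 := by
        have h1 : |w.im| ≤ R := by
          have h2 : ‖w‖ ≤ R := mem_closedBall_zero_iff.mp hwB
          calc |w.im| ≤ ‖w‖ := Complex.abs_im_le_norm w
            _ ≤ R := h2
        calc w.im ^ 2 = |w.im| ^ 2 := (_root_.sq_abs _).symm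
          _ ≤ R ^ 2 := by
              apply pow_le_pow_left₀ (abs_nonneg _) h1
      refine ⟨M + Multiset.replicate m (w.im ^ 2), G, hG, hGe, ?_, ?_, hGz⟩
      · intro t ht
        rw [Multiset.mem_add] at ht
        rcases ht with ht | ht
        · exact hMpos t ht
        · rw [Multiset.eq_of_mem_replicate ht]; exact ⟨htpos, htle⟩
      · intro z
        rw [qprod_add, qprod_replicate]
        have hq : (z^2 + ((w.im ^ 2 : ℝ) : ℂ)) ^ m = (z^2 - w^2) ^ m := by
          rw [hw2]; push_cast; ring_nf
        rw [hq, hgj z, hGid z]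
        ring



lemma deriv_even_zero {G : ℂ → ℂ} (hG : Differentiable ℂ G) (he : ∀ z, G (-z) = G z) :
    deriv G 0 = 0 := by
  have h1 : HasDerivAt (fun z => G (-z)) (deriv G (-0) * (-1)) 0 :=
    ((hG (-0)).hasDerivAt).comp 0 (hasDerivAt_neg 0)
  have h2 : HasDerivAt G (deriv G (-0) * (-1)) 0 := by
    apply h1.congr_of_eventuallyEq
    filter_upwards with z using (he z).symm
  have h3 : HasDerivAt G (deriv G 0) 0 := (hG 0).hasDerivAt
  have := h2.unique h3
  rw [neg_zero] at this
  -- this : deriv G 0 * -1 = deriv G 0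
  have : deriv G 0 * (-1) = deriv G 0 := this
  linear_combination -this / 2

lemma exists_log {G : ℂ → ℂ} {R : ℝ} (hR : 0 < R) (hG : Differentiable ℂ G)
    (hnz : ∀ z ∈ ball (0:ℂ) R, G z ≠ 0) (hG1 : G 0 = 1) :
    ∃ h : ℂ → ℂ, (∀ z ∈ ball (0:ℂ) R, HasDerivAt h (deriv G z / G z) z) ∧ h 0 = 0 ∧
      (∀ z ∈ ball (0:ℂ) R, Complex.exp (h z) = G z) := by
  have hA : AnalyticOnNhd ℂ G univ := fun z _ => hG.analyticAt z
  have hG' : Differentiable ℂ (deriv G) := fun z => (hA.deriv z (mem_univ z)).differentiableAt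
  set u : ℂ → ℂ := fun z => deriv G z / G z with hu_def
  have hu : ∀ z ∈ ball (0:ℂ) R, DifferentiableAt ℂ u z := fun z hz =>
    (hG' z).div (hG z) (hnz z hz)
  have huc : ContinuousOn u (ball (0:ℂ) R) := fun z hz =>
    (hu z hz).continuousAt.continuousWithinAt
  have huAn : AnalyticOnNhd ℂ u (ball (0:ℂ) R) := by
    apply DifferentiableOn.analyticOnNhd (fun z hz => (hu z hz).differentiableWithinAt)
      isOpen_ball
  have hu'c : ContinuousOn (deriv u) (ball (0:ℂ) R) := fun z hz =>
    ((huAn.deriv z hz).differentiableAt.continuousAt).continuousWithinAt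
  -- the primitive
  set h : ℂ → ℂ := fun z => ∫ t in (0:ℝ)..1, z * u ((t:ℂ) * z) with hh_def
  have hmem : ∀ {z : ℂ}, z ∈ ball (0:ℂ) R → ∀ {t : ℝ}, |t| ≤ 1 → (t:ℂ) * z ∈ ball (0:ℂ) R := by
    intro z hz t ht
    rw [mem_ball_zero_iff] at hz ⊢
    calc ‖(t:ℂ) * z‖ = |t| * ‖z‖ := by simp [norm_mul]
      _ ≤ 1 * ‖z‖ := by apply mul_le_mul_of_nonneg_right ht (norm_nonneg z)
      _ < R := by simpa using hz
  have key : ∀ z ∈ ball (0:ℂ) R, HasDerivAt h (u z) z := by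
    intro z₀ hz₀
    rw [mem_ball_zero_iff] at hz₀
    set ε := (R - ‖z₀‖) / 2 with hε_def
    have hε : 0 < ε := by simp only [hε_def]; linarith
    set R' := ‖z₀‖ + ε with hR'_def
    have hR' : R' < R := by simp only [hR'_def, hε_def]; linarith
    have hsub : ∀ {x : ℂ}, x ∈ ball z₀ ε → ∀ {t : ℝ}, |t| ≤ 1 → (t:ℂ) * x ∈ closedBall (0:ℂ) R' := by
      intro x hx t ht
      rw [mem_ball] at hx
      rw [mem_closedBall_zero_iff]
      have hxn : ‖x‖ ≤ R' := by
        calc ‖x‖ = ‖z₀ + (x - z₀)‖ := by ring_nf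
          _ ≤ ‖z₀‖ + ‖x - z₀‖ := norm_add_le _ _
          _ ≤ ‖z₀‖ + ε := by
              have : ‖x - z₀‖ = dist x z₀ := by rw [dist_eq_norm]
              rw [this]; linarith
      calc ‖(t:ℂ) * x‖ = |t| * ‖x‖ := by simp [norm_mul]
        _ ≤ 1 * R' := by
            apply mul_le_mul ht hxn (norm_nonneg x) zero_le_one
        _ = R' := one_mul R'
    have hcb_sub : closedBall (0:ℂ) R' ⊆ ball (0:ℂ) R := closedBall_subset_ball hR'
    -- bounds on u and deriv u on the compact closedBall 0 R'
    have hcpt : IsCompact (closedBall (0:ℂ) R') := isCompact_closedBall _ _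
    obtain ⟨Cu, hCu⟩ : ∃ C, ∀ w ∈ closedBall (0:ℂ) R', ‖u w‖ ≤ C := by
      rcases hcpt.exists_bound_of_continuousOn (huc.mono hcb_sub) with ⟨C, hC⟩
      exact ⟨C, hC⟩
    obtain ⟨Cu', hCu'⟩ : ∃ C, ∀ w ∈ closedBall (0:ℂ) R', ‖deriv u w‖ ≤ C := by
      rcases hcpt.exists_bound_of_continuousOn (hu'c.mono hcb_sub) with ⟨C, hC⟩
      exact ⟨C, hC⟩
    -- apply differentiation under the integral
    set F : ℂ → ℝ → ℂ := fun x t => x * u ((t:ℂ) * x) with hF_def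
    set F' : ℂ → ℝ → ℂ := fun x t => u ((t:ℂ) * x) + x * (deriv u ((t:ℂ) * x) * (t:ℂ)) with hF'_def
    have habs : ∀ {t : ℝ}, t ∈ Set.uIoc (0:ℝ) 1 → |t| ≤ 1 := by
      intro t ht
      rw [uIoc_of_le zero_le_one] at ht
      rw [abs_le]; constructor <;> [linarith [ht.1]; linarith [ht.2]]
    have hcont_tx : ∀ x ∈ ball z₀ ε, ContinuousOn (F x) (uIcc (0:ℝ) 1) := by
      intro x hx
      apply ContinuousOn.mul continuousOn_const
      apply huc.comp (by fun_prop)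
      intro t ht
      rw [uIcc_of_le zero_le_one] at ht
      exact hcb_sub (hsub hx (abs_le.mpr ⟨by linarith [ht.1], ht.2⟩))
    have hz₀ball : z₀ ∈ ball z₀ ε := mem_ball_self hε
    have hF_meas : ∀ᶠ x in 𝓝 z₀, AEStronglyMeasurable (F x) (volume.restrict (Set.uIoc (0:ℝ) 1)) := by
      filter_upwards [ball_mem_nhds z₀ hε] with x hx
      apply ContinuousOn.aestronglyMeasurable ((hcont_tx x hx).mono _) measurableSet_uIoc
      rw [uIcc_of_le zero_le_one, uIoc_of_le zero_le_one]
      exact Ioc_subset_Icc_self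
    have hF_int : IntervalIntegrable (F z₀) volume 0 1 :=
      (hcont_tx z₀ hz₀ball).intervalIntegrable
    have hF'_cont : ContinuousOn (F' z₀) (uIcc (0:ℝ) 1) := by
      have hmapsto : ∀ t ∈ uIcc (0:ℝ) 1, (t:ℂ) * z₀ ∈ closedBall (0:ℂ) R' := by
        intro t ht
        rw [uIcc_of_le zero_le_one] at ht
        exact hsub hz₀ball (abs_le.mpr ⟨by linarith [ht.1], ht.2⟩)
      apply ContinuousOn.add
      · exact huc.comp (by fun_prop) (fun t ht => hcb_sub (hmapsto t ht))
      · apply ContinuousOn.mul continuousOn_const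
        apply ContinuousOn.mul _ (by fun_prop)
        exact hu'c.comp (by fun_prop) (fun t ht => hcb_sub (hmapsto t ht))
    have hF'_meas : AEStronglyMeasurable (F' z₀) (volume.restrict (Set.uIoc (0:ℝ) 1)) := by
      apply ContinuousOn.aestronglyMeasurable (hF'_cont.mono _) measurableSet_uIoc
      rw [uIcc_of_le zero_le_one, uIoc_of_le zero_le_one]
      exact Ioc_subset_Icc_self
    have h_bound : ∀ᵐ t ∂volume, t ∈ Set.uIoc (0:ℝ) 1 → ∀ x ∈ ball z₀ ε,
        ‖F' x t‖ ≤ Cu + R' * (Cu' * 1) := by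
      apply Filter.Eventually.of_forall
      intro t ht x hx
      have htx := hsub hx (habs ht)
      have hxn : ‖x‖ ≤ R' := by
        have := hsub hx (by norm_num : |(1:ℝ)| ≤ 1)
        simpa using this
      calc ‖F' x t‖ ≤ ‖u ((t:ℂ) * x)‖ + ‖x * (deriv u ((t:ℂ) * x) * (t:ℂ))‖ := norm_add_le _ _
        _ ≤ Cu + R' * (Cu' * 1) := by
            apply add_le_add (hCu _ htx)
            rw [norm_mul, norm_mul]
            apply mul_le_mul hxn _ (by positivity) (by linarith [norm_nonneg x, (norm_nonneg (u ((t:ℂ)*x))).trans (hCu _ htx)])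
            apply mul_le_mul (hCu' _ htx) _ (norm_nonneg _) ((norm_nonneg _).trans (hCu' _ htx))
            simpa using habs ht
    have h_diff : ∀ᵐ t ∂volume, t ∈ Set.uIoc (0:ℝ) 1 → ∀ x ∈ ball z₀ ε,
        HasDerivAt (fun x => F x t) (F' x t) x := by
      apply Filter.Eventually.of_forall
      intro t ht x hx
      have htx : (t:ℂ) * x ∈ ball (0:ℂ) R := hcb_sub (hsub hx (habs ht))
      have hinner : HasDerivAt (fun x : ℂ => (t:ℂ) * x) (t:ℂ) x := by
        simpa using (hasDerivAt_id x).const_mul (t:ℂ)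
      have houter : HasDerivAt u (deriv u ((t:ℂ) * x)) ((t:ℂ) * x) :=
        (hu _ htx).hasDerivAt
      have hcomp : HasDerivAt (fun x => u ((t:ℂ) * x)) (deriv u ((t:ℂ) * x) * (t:ℂ)) x :=
        houter.comp x hinner
      have h9 := (hasDerivAt_id x).mul hcomp
      simp only [hF_def, hF'_def]
      refine h9.congr_deriv ?_
      simp [id]
    obtain ⟨-, hder⟩ := intervalIntegral.hasDerivAt_integral_of_dominated_loc_of_deriv_le (ball_mem_nhds z₀ hε)
      hF_meas hF_int hF'_meas h_bound (intervalIntegrable_const) h_diff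
    -- now compute the integral of F' z₀ via FTC
    have hFTC : (∫ t in (0:ℝ)..1, F' z₀ t) = u z₀ := by
      set ψ : ℝ → ℂ := fun t => (t:ℂ) * u ((t:ℂ) * z₀) with hψ_def
      have hψ_deriv : ∀ t ∈ uIcc (0:ℝ) 1, HasDerivAt ψ (F' z₀ t) t := by
        intro t ht
        rw [uIcc_of_le zero_le_one] at ht
        have htz : (t:ℂ) * z₀ ∈ ball (0:ℂ) R :=
          hcb_sub (hsub hz₀ball (abs_le.mpr ⟨by linarith [ht.1], ht.2⟩))
        have hΦ : HasDerivAt (fun w : ℂ => w * u (w * z₀))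
            (u ((t:ℂ) * z₀) + (t:ℂ) * (deriv u ((t:ℂ) * z₀) * z₀)) (t:ℂ) := by
          have hinner : HasDerivAt (fun w : ℂ => w * z₀) z₀ (t:ℂ) := by
            simpa using (hasDerivAt_id (t:ℂ)).mul_const z₀
          have houter : HasDerivAt u (deriv u ((t:ℂ) * z₀)) ((t:ℂ) * z₀) := (hu _ htz).hasDerivAt
          have hcomp := (houter.comp (t:ℂ) hinner)
          have := (hasDerivAt_id (t:ℂ)).mul hcomp
          exact this.congr_deriv (by simp)
        have := hΦ.comp_ofReal
        convert this using 1
        simp only [hF'_def]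
        ring
      have hF'int : IntervalIntegrable (F' z₀) volume 0 1 := hF'_cont.intervalIntegrable
      have := intervalIntegral.integral_eq_sub_of_hasDerivAt hψ_deriv hF'int
      rw [this]
      simp [hψ_def]
    rw [hFTC] at hder
    exact hder
  -- h 0 = 0
  have hh0 : h 0 = 0 := by
    simp [hh_def]
  -- exp (h z) = G z
  have hexp : ∀ z ∈ ball (0:ℂ) R, Complex.exp (h z) = G z := by
    intro z hz
    rcases eq_or_ne z 0 with rfl | hz0
    · rw [hh0, hG1, Complex.exp_zero]
    -- A t = ∫_0^t z * u (s z) ds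
    set f : ℝ → ℂ := fun s => z * u ((s:ℂ) * z) with hf_def
    set A : ℝ → ℂ := fun t => ∫ s in (0:ℝ)..t, f s with hA_def
    rw [mem_ball_zero_iff] at hz
    set T : ℝ := (1 + R / ‖z‖) / 2 with hT_def
    have hz_pos : 0 < ‖z‖ := norm_pos_iff.mpr hz0
    have hT1 : 1 < T := by
      rw [hT_def]
      have : 1 < R / ‖z‖ := (one_lt_div hz_pos).mpr hz
      linarith
    have hTR : T * ‖z‖ < R := by
      rw [hT_def]
      rw [div_mul_eq_mul_div, div_lt_iff₀ (by norm_num : (0:ℝ) < 2)]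
      have h1 : R / ‖z‖ * ‖z‖ = R := div_mul_cancel₀ R hz_pos.ne'
      nlinarith [hz]
    have hmem2 : ∀ {s : ℝ}, |s| ≤ T → (s:ℂ) * z ∈ ball (0:ℂ) R := by
      intro s hs
      rw [mem_ball_zero_iff]
      calc ‖(s:ℂ) * z‖ = |s| * ‖z‖ := by simp [norm_mul]
        _ ≤ T * ‖z‖ := mul_le_mul_of_nonneg_right hs (norm_nonneg z)
        _ < R := hTR
    have hf_cont : ContinuousOn f (Ioo (-T) T) := by
      apply ContinuousOn.mul continuousOn_const
      apply huc.comp (by fun_prop)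
      intro s hs
      exact hmem2 (abs_le.mpr ⟨hs.1.le, hs.2.le⟩)
    have hopen : IsOpen (Ioo (-T) T) := isOpen_Ioo
    have hsub01 : Icc (0:ℝ) 1 ⊆ Ioo (-T) T := by
      intro s hs
      constructor <;> [linarith [hs.1]; linarith [hs.2]]
    have hA_deriv : ∀ t ∈ Icc (0:ℝ) 1, HasDerivAt A (f t) t := by
      intro t ht
      apply intervalIntegral.integral_hasDerivAt_right
      · apply ContinuousOn.intervalIntegrable
        apply hf_cont.mono
        intro s hs
        rw [uIcc_of_le ht.1] at hs
        exact hsub01 ⟨hs.1, le_trans hs.2 ht.2⟩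
      · exact (hf_cont.stronglyMeasurableAtFilter hopen t (hsub01 ht))
      · exact (hf_cont.continuousAt (hopen.mem_nhds (hsub01 ht)))
    -- η t = G (t z) * exp (-A t) is constant on [0,1]
    set η : ℝ → ℂ := fun t => G ((t:ℂ) * z) * Complex.exp (-A t) with hη_def
    have hη_deriv : ∀ t ∈ Icc (0:ℝ) 1, HasDerivAt η 0 t := by
      intro t ht
      have htz : (t:ℂ) * z ∈ ball (0:ℂ) R := hmem2 (abs_le.mpr ⟨by linarith [ht.1], by linarith [ht.2]⟩)
      have hGtz : HasDerivAt (fun s : ℝ => G ((s:ℂ) * z)) (deriv G ((t:ℂ) * z) * z) t := by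
        have hinner : HasDerivAt (fun w : ℂ => w * z) z (t:ℂ) := by
          simpa using (hasDerivAt_id (t:ℂ)).mul_const z
        exact ((hG _).hasDerivAt.comp (t:ℂ) hinner).comp_ofReal
      have hAt : HasDerivAt A (f t) t := hA_deriv t ht
      have hexpA : HasDerivAt (fun s : ℝ => Complex.exp (-A s)) (-(f t) * Complex.exp (-A t)) t := by
        have h1 : HasDerivAt (fun s : ℝ => -A s) (-(f t)) t := hAt.neg
        have := h1.cexp
        convert this using 1
        ring
      have := hGtz.mul hexpA
      refine this.congr_deriv (Eq.symm ?_)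
      simp only [hf_def, hu_def]
      field_simp [hnz _ htz]
      ring
    have hconst : η 1 = η 0 := by
      have hdiff : DifferentiableOn ℝ η (Icc (0:ℝ) 1) := fun t ht =>
        ((hη_deriv t ht).differentiableAt.differentiableWithinAt)
      apply Convex.is_const_of_fderivWithin_eq_zero (convex_Icc (0:ℝ) 1) hdiff _ _ _
      · intro t ht
        have := (hη_deriv t ht).hasFDerivAt.hasFDerivWithinAt.fderivWithin
          ((uniqueDiffOn_Icc zero_lt_one) t ht)
        rw [this]
        ext y
        simp
      · exact ⟨zero_le_one, le_refl 1⟩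
      · exact ⟨le_refl 0, zero_le_one⟩
    have hA0 : A 0 = 0 := by simp [hA_def]
    have hA1 : A 1 = h z := by
      simp only [hA_def, hh_def, hf_def]
    have hη1 : G z * Complex.exp (-h z) = 1 := by
      have h1 := hconst
      simp only [hη_def, hA0, hA1] at h1
      simpa [hG1] using h1
    have := congrArg (· * Complex.exp (h z)) hη1
    simp only [one_mul] at this
    rw [← this]
    rw [mul_assoc, ← Complex.exp_add]
    simp
  exact ⟨h, key, hh0, hexp⟩



lemma dslope_diffOn {f : ℂ → ℂ} {R : ℝ} (hf : DifferentiableOn ℂ f (ball (0:ℂ) R)) :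
    DifferentiableOn ℂ (dslope f 0) (ball (0:ℂ) R) := by
  intro z hz
  rcases eq_or_ne z 0 with rfl | hz0
  · have hfa : AnalyticAt ℂ f 0 := hf.analyticAt (isOpen_ball.mem_nhds hz)
    obtain ⟨p, hp⟩ := hfa
    exact hp.has_fpower_series_dslope_fslope.analyticAt.differentiableAt.differentiableWithinAt
  · exact ((differentiableAt_dslope_of_ne hz0).mpr
      (hf.differentiableAt (isOpen_ball.mem_nhds hz))).differentiableWithinAt

/-- Borel–Carathéodory-type smallness: if `h` is analytic on `ball 0 R`, vanishes to second
order at `0`, and `Re h ≤ A` on the ball, then `h` is small on the unit ball. -/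
lemma bc_small {h : ℂ → ℂ} {R A : ℝ} (hR : 2 ≤ R) (hA : 0 ≤ A)
    (hd : DifferentiableOn ℂ h (ball (0:ℂ) R))
    (h0 : h 0 = 0) (hd0 : deriv h 0 = 0)
    (hre : ∀ z ∈ ball (0:ℂ) R, (h z).re ≤ A) :
    ∀ z : ℂ, ‖z‖ ≤ 1 → ‖h z‖ ≤ 8 * (A + 1) / R ^ 2 := by
  have hR0 : (0:ℝ) < R := by linarith
  set A' : ℝ := A + 1 with hA'_def
  have hA' : 1 ≤ A' := by simp [hA'_def]; linarith
  -- the denominator never vanishes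
  have hden : ∀ z ∈ ball (0:ℂ) R, ((2 * A' : ℝ) : ℂ) - h z ≠ 0 := by
    intro z hz hzero
    have hre' : (((2 * A' : ℝ) : ℂ) - h z).re = 2 * A' - (h z).re := by
      simp [Complex.sub_re]
    rw [hzero] at hre'
    simp at hre'
    have := hre z hz
    linarith
  set g : ℂ → ℂ := fun z => h z / (((2 * A' : ℝ) : ℂ) - h z) with hg_def
  have hgd : DifferentiableOn ℂ g (ball (0:ℂ) R) :=
    hd.div ((differentiableOn_const _).sub hd) hden
  have hg0 : g 0 = 0 := by simp [hg_def, h0]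
  -- strict bound ‖g‖ < 1
  have hglt : ∀ z ∈ ball (0:ℂ) R, ‖g z‖ < 1 := by
    intro z hz
    have h1 : ‖h z‖ < ‖((2 * A' : ℝ) : ℂ) - h z‖ := by
      have e1 : Complex.normSq (h z) < Complex.normSq (((2 * A' : ℝ) : ℂ) - h z) := by
        simp only [Complex.normSq_apply, Complex.sub_re, Complex.sub_im, Complex.ofReal_re,
          Complex.ofReal_im]
        have := hre z hz
        nlinarith [Complex.normSq_nonneg (h z)]
      have e2 := Real.sqrt_lt_sqrt (Complex.normSq_nonneg (h z)) e1
      rwa [← Complex.norm_def, ← Complex.norm_def] at e2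
    rw [hg_def]
    simp only [norm_div]
    rw [div_lt_one (lt_of_le_of_lt (norm_nonneg _) h1)]
    exact h1
  have hmaps : MapsTo g (ball (0:ℂ) R) (ball (g 0) 1) := by
    intro z hz
    rw [hg0, mem_ball_zero_iff]
    exact hglt z hz
  -- first Schwarz application
  set d : ℂ → ℂ := dslope g 0 with hd_def
  have hdsmall : ∀ z ∈ ball (0:ℂ) R, ‖d z‖ ≤ 1 / R :=
    fun z hz => Complex.norm_dslope_le_div_of_mapsTo_ball hgd (hmaps.mono_right ball_subset_closedBall) hz
  -- deriv g 0 = 0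
  have hgderiv : HasDerivAt g 0 0 := by
    have hball : (0:ℂ) ∈ ball (0:ℂ) R := mem_ball_self hR0
    have hh : HasDerivAt h 0 0 := by
      have := (hd.differentiableAt (isOpen_ball.mem_nhds hball)).hasDerivAt
      rwa [hd0] at this
    have hc : HasDerivAt (fun z => ((2 * A' : ℝ) : ℂ) - h z) 0 0 := by
      have := (hasDerivAt_const (0:ℂ) (((2 * A' : ℝ) : ℂ))).sub hh; rwa [sub_zero] at this
    have h7 := hh.div hc (hden 0 (mem_ball_self hR0))
    rw [hg_def]
    simpa [h0, Pi.div_def] using h7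
  have hd0' : d 0 = 0 := by
    rw [hd_def, dslope_same]
    exact hgderiv.deriv
  -- second Schwarz application
  have hdd : DifferentiableOn ℂ d (ball (0:ℂ) R) := dslope_diffOn hgd
  have hdmaps : MapsTo d (ball (0:ℂ) R) (ball (d 0) (2 / R)) := by
    intro z hz
    rw [hd0', mem_ball_zero_iff]
    calc ‖d z‖ ≤ 1 / R := hdsmall z hz
      _ < 2 / R := by rw [div_lt_div_iff₀ hR0 hR0]; nlinarith
  have hd2 : ∀ z ∈ ball (0:ℂ) R, ‖d z‖ ≤ 2 / R ^ 2 * ‖z‖ := by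
    intro z hz
    have := Complex.dist_le_div_mul_dist_of_mapsTo_ball hdd (hdmaps.mono_right ball_subset_closedBall) hz
    rw [hd0'] at this
    simp only [dist_zero_right] at this
    calc ‖d z‖ ≤ 2 / R / R * ‖z‖ := this
      _ = 2 / R ^ 2 * ‖z‖ := by ring
  -- bound on g
  have hgsmall : ∀ z ∈ ball (0:ℂ) R, ‖g z‖ ≤ 2 / R ^ 2 * ‖z‖ ^ 2 := by
    intro z hz
    have hzd : (z - 0) • d z = g z - g 0 := sub_smul_dslope g 0 z
    rw [hg0, sub_zero, sub_zero, smul_eq_mul] at hzd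
    rw [← hzd, norm_mul]
    calc ‖z‖ * ‖d z‖ ≤ ‖z‖ * (2 / R ^ 2 * ‖z‖) := by
          apply mul_le_mul_of_nonneg_left (hd2 z hz) (norm_nonneg z)
      _ = 2 / R ^ 2 * ‖z‖ ^ 2 := by ring
  -- recover h
  intro z hz1
  have hzball : z ∈ ball (0:ℂ) R := by
    rw [mem_ball_zero_iff]; linarith
  have hgz : ‖g z‖ ≤ 1 / 2 := by
    calc ‖g z‖ ≤ 2 / R ^ 2 * ‖z‖ ^ 2 := hgsmall z hzball
      _ ≤ 2 / R ^ 2 * 1 := by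
          apply mul_le_mul_of_nonneg_left _ (by positivity)
          nlinarith [norm_nonneg z]
      _ ≤ 1 / 2 := by
          rw [mul_one, div_le_div_iff₀ (by positivity) (by norm_num)]
          nlinarith
  have hgc : g z * (((2 * A' : ℝ) : ℂ) - h z) = h z := by
    simp only [hg_def]
    exact div_mul_cancel₀ _ (hden z hzball)
  have hformula : h z * (1 + g z) = ((2 * A' : ℝ) : ℂ) * g z := by
    linear_combination (-1 : ℂ) * hgc
  have h1g : (1:ℝ) / 2 ≤ ‖1 + g z‖ := by
    have h2 := norm_sub_norm_le (1:ℂ) (-(g z))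
    rw [sub_neg_eq_add] at h2
    simp only [norm_neg, norm_one] at h2
    linarith
  have : ‖h z‖ * ‖1 + g z‖ = 2 * A' * ‖g z‖ := by
    rw [← norm_mul, hformula, norm_mul, Complex.norm_real, Real.norm_eq_abs,
      _root_.abs_of_nonneg (by linarith : (0:ℝ) ≤ 2 * A')]
  calc ‖h z‖ = ‖h z‖ * 1 := (mul_one _).symm
    _ ≤ ‖h z‖ * (2 * ‖1 + g z‖) := by
        apply mul_le_mul_of_nonneg_left _ (norm_nonneg _)
        linarith
    _ = 2 * (‖h z‖ * ‖1 + g z‖) := by ring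
    _ = 2 * (2 * A' * ‖g z‖) := by rw [this]
    _ ≤ 2 * (2 * A' * (2 / R ^ 2 * ‖z‖ ^ 2)) := by
        apply mul_le_mul_of_nonneg_left _ (by norm_num)
        apply mul_le_mul_of_nonneg_left (hgsmall z hzball) (by linarith)
    _ ≤ 8 * (A + 1) / R ^ 2 := by
        rw [hA'_def]
        have hz2 : ‖z‖ ^ 2 ≤ 1 := by nlinarith [norm_nonneg z]
        have h8 : (0:ℝ) ≤ 8 * (A + 1) / R ^ 2 := by positivity
        have key : 2 * (2 * (A + 1) * (2 / R ^ 2 * ‖z‖ ^ 2)) = (8 * (A + 1) / R ^ 2) * ‖z‖ ^ 2 := by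
          ring
        rw [key]
        nlinarith



lemma conj_entire {φ : ℂ → ℂ} (hφ : Differentiable ℂ φ) :
    Differentiable ℂ (fun z => (starRingEnd ℂ) (φ ((starRingEnd ℂ) z))) := by
  intro z
  have hd := (hφ ((starRingEnd ℂ) z)).hasDerivAt
  rw [hasDerivAt_iff_tendsto_slope] at hd
  have hconj_tendsto : Tendsto (fun w => (starRingEnd ℂ) w) (𝓝[≠] z)
      (𝓝[≠] ((starRingEnd ℂ) z)) := by
    apply Filter.Tendsto.inf
    · exact (Complex.continuous_conj.tendsto z)
    · rw [tendsto_principal_principal]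
      intro w hw
      simp only [mem_compl_iff, mem_singleton_iff] at *
      intro hmem
      apply hw
      have := congrArg (starRingEnd ℂ) hmem
      simpa using this
  have hslope : ∀ w, slope (fun z => (starRingEnd ℂ) (φ ((starRingEnd ℂ) z))) z w
      = (starRingEnd ℂ) (slope φ ((starRingEnd ℂ) z) ((starRingEnd ℂ) w)) := by
    intro w
    rw [slope_def_field, slope_def_field]
    rw [map_div₀, map_sub, map_sub]
    simp
  have hcomp : Tendsto (fun w => (starRingEnd ℂ)
      (slope φ ((starRingEnd ℂ) z) ((starRingEnd ℂ) w))) (𝓝[≠] z)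
      (𝓝 ((starRingEnd ℂ) (deriv φ ((starRingEnd ℂ) z)))) :=
    (Complex.continuous_conj.tendsto _).comp (hd.comp hconj_tendsto)
  have : HasDerivAt (fun z => (starRingEnd ℂ) (φ ((starRingEnd ℂ) z)))
      ((starRingEnd ℂ) (deriv φ ((starRingEnd ℂ) z))) z := by
    rw [hasDerivAt_iff_tendsto_slope]
    apply hcomp.congr'
    filter_upwards with w
    exact (hslope w).symm
  exact this.differentiableAt

lemma real_symm {φ : ℂ → ℂ} (hφ : Differentiable ℂ φ)
    {s₀ : ℝ} (hpos : ∀ s : ℝ, s₀ ≤ s → ∃ r : ℝ, 0 < r ∧ φ s = r) :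
    ∀ z, (starRingEnd ℂ) (φ ((starRingEnd ℂ) z)) = φ z := by
  set F : ℂ → ℂ := fun z => (starRingEnd ℂ) (φ ((starRingEnd ℂ) z)) with hF_def
  have hFd : Differentiable ℂ F := conj_entire hφ
  have hFA : AnalyticOnNhd ℂ F univ := fun z _ => hFd.analyticAt z
  have hφA : AnalyticOnNhd ℂ φ univ := fun z _ => hφ.analyticAt z
  set z₀ : ℂ := ((s₀ + 1 : ℝ) : ℂ) with hz₀_def
  have hreal : ∀ (x : ℝ), s₀ ≤ x → F x = φ x := by
    intro x hx
    obtain ⟨r, hr, hφx⟩ := hpos x hx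
    simp only [hF_def]
    rw [Complex.conj_ofReal, hφx, Complex.conj_ofReal]
  have hfreq : ∃ᶠ z in 𝓝[≠] z₀, F z = φ z := by
    have hseq : Tendsto (fun n : ℕ => ((s₀ + 1 + 1/(n+1) : ℝ) : ℂ)) atTop (𝓝[≠] z₀) := by
      apply tendsto_nhdsWithin_of_tendsto_nhds_of_eventually_within
      · rw [hz₀_def]
        apply (Complex.continuous_ofReal.tendsto _).comp
        have : Tendsto (fun n : ℕ => 1/((n:ℝ)+1)) atTop (𝓝 0) := by
          apply tendsto_one_div_add_atTop_nhds_zero_nat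
        have h2 := this.const_add (s₀ + 1)
        simpa using h2
      · apply Filter.Eventually.of_forall
        intro n
        simp only [mem_compl_iff, mem_singleton_iff, hz₀_def]
        intro h
        have := Complex.ofReal_injective h
        have hn : 0 < 1/((n:ℝ)+1) := by positivity
        linarith
    apply hseq.frequently
    apply Filter.Eventually.frequently
    apply Filter.Eventually.of_forall
    intro n
    apply hreal
    have hn : 0 < 1/((n:ℝ)+1) := by positivity
    linarith
  have := hFA.eqOn_of_preconnected_of_frequently_eq hφA isPreconnected_univ (mem_univ z₀) hfreq
  intro z
  exact this (mem_univ z)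

/-- values of φ on the real axis are real -/
lemma real_on_real {φ : ℂ → ℂ} (hφ : Differentiable ℂ φ)
    {s₀ : ℝ} (hpos : ∀ s : ℝ, s₀ ≤ s → ∃ r : ℝ, 0 < r ∧ φ s = r) :
    ∀ x : ℝ, (φ x).im = 0 := by
  intro x
  have := real_symm hφ hpos x
  rw [Complex.conj_ofReal] at this
  have him := congrArg Complex.im this
  simp only [Complex.conj_im] at him
  linarith


lemma qprod_at_zero (M : Multiset ℝ) : qprod M 0 = ((M.prod : ℝ) : ℂ) := by
  induction M using Multiset.induction with
  | empty => simp [qprod]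
  | cons t M ih =>
      rw [Multiset.prod_cons, qprod, Multiset.map_cons, Multiset.prod_cons, ← qprod, ih]
      push_cast
      ring

lemma qprod_diff (M : Multiset ℝ) : Differentiable ℂ (fun z => qprod M z) := by
  have : (fun z => qprod M z) = fun z => (qpoly M).eval z := by
    funext z; rw [qpoly_eval]
  rw [this]
  exact (qpoly M).differentiable

theorem core_even {φ : ℂ → ℂ} (hφ : Differentiable ℂ φ)
    (heven : ∀ z, φ (-z) = φ z)
    {s₀ : ℝ} (hpos : ∀ s : ℝ, s₀ ≤ s → ∃ r : ℝ, 0 < r ∧ φ s = r)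
    {C : ℝ} (hC : 0 < C) (hgrow : ∀ s : ℂ, ‖φ s‖ ≤ C * Real.exp (‖s‖ ^ (3/2 : ℝ)))
    (hzeros : ∀ z, φ z = 0 → z.re = 0) (hphi0 : φ 0 ≠ 0) :
    ∀ l : ℕ, (iteratedDeriv l φ 0).im = 0 ∧ 0 ≤ (iteratedDeriv l φ 0).re := by
  have him := real_on_real hφ hpos
  -- φ 0 is a positive real r₀
  obtain ⟨r₀, hr₀pos, hφ0eq⟩ : ∃ r₀ : ℝ, 0 < r₀ ∧ φ 0 = (r₀ : ℂ) := by
    set b : ℝ := max s₀ 0 with hb_def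
    obtain ⟨r, hr, hφb⟩ := hpos b (le_max_left _ _)
    set f : ℝ → ℝ := fun x => (φ x).re with hf_def
    have hfc : Continuous f :=
      Complex.continuous_re.comp (hφ.continuous.comp Complex.continuous_ofReal)
    have hfb : f b = r := by simp only [hf_def]; rw [hφb]; simp
    refine ⟨(φ 0).re, ?_, ?_⟩
    · by_contra hle
      push_neg at hle
      have h0b : (0:ℝ) ≤ b := le_max_right _ _
      have hIVT := intermediate_value_Icc h0b hfc.continuousOn
      have hf0 : f 0 = (φ 0).re := by simp only [hf_def]; norm_num
      have hmem : (0:ℝ) ∈ Icc (f 0) (f b) := by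
        constructor
        · rw [hf0]; linarith
        · rw [hfb]; exact hr.le
      obtain ⟨x, _, hfx⟩ := hIVT hmem
      have hφx : φ x = 0 := by
        apply Complex.ext
        · simpa [hf_def] using hfx
        · simpa using him x
      have hx0 : ((x:ℂ)).re = 0 := hzeros _ hφx
      rw [Complex.ofReal_re] at hx0
      apply hphi0
      rw [hx0] at hφx
      simpa using hφx
    · apply Complex.ext
      · simp
      · simpa using him 0
  have hz' : ∀ z, φ z = 0 → z.re = 0 ∧ z ≠ 0 :=
    fun z h => ⟨hzeros z h, fun h0 => hphi0 (h0 ▸ h)⟩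
  -- the ball radii
  set R : ℕ → ℝ := fun n => 4 * (n + 1) with hR_def
  have hRpos : ∀ n, 0 < R n := by
    intro n; simp only [hR_def]; positivity
  have hR2 : ∀ n, 2 ≤ R n := by
    intro n; simp only [hR_def]
    have : (0:ℝ) ≤ n := Nat.cast_nonneg n
    nlinarith
  -- factorization for each n
  have H : ∀ n : ℕ, ∃ (M : Multiset ℝ) (G : ℂ → ℂ), Differentiable ℂ G ∧
      (∀ z, G (-z) = G z) ∧ (∀ t ∈ M, 0 < t ∧ t ≤ (R n)^2) ∧
      (∀ z, φ z = qprod M z * G z) ∧ (∀ z ∈ closedBall (0:ℂ) (R n), G z ≠ 0) := by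
    intro n
    have hfin := zeros_finite hφ hphi0 (R n)
    exact ball_factor hfin.toFinset.card φ hφ heven hz' (R n) hfin le_rfl
  choose M G hGdiff hGeven hMt hid hGnz using H
  set P : ℕ → ℝ := fun n => (M n).prod with hP_def
  have hPpos : ∀ n, 0 < P n := fun n => mprod_pos (fun t ht => (hMt n t ht).1)
  set Nf : ℕ → ℂ → ℂ := fun n z => ((P n : ℝ) : ℂ) * G n z / φ 0 with hNf_def
  have hNdiff : ∀ n, Differentiable ℂ (Nf n) := by
    intro n
    apply Differentiable.div_const
    exact (hGdiff n).const_mul _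
  have hN0 : ∀ n, Nf n 0 = 1 := by
    intro n
    have h1 := hid n 0
    rw [qprod_at_zero] at h1
    simp only [hNf_def]
    rw [← h1]
    exact div_self hphi0
  have hNeven : ∀ n z, Nf n (-z) = Nf n z := by
    intro n z
    simp only [hNf_def, hGeven n z]
  have hNnz : ∀ n, ∀ z ∈ closedBall (0:ℂ) (R n), Nf n z ≠ 0 := by
    intro n z hz
    simp only [hNf_def]
    apply div_ne_zero _ hphi0
    exact mul_ne_zero (by exact_mod_cast (hPpos n).ne') (hGnz n z hz)
  -- growth bound on the closed ball of radius 2 R n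
  set B : ℕ → ℝ := fun n => C * Real.exp ((2 * R n) ^ (3/2 : ℝ)) / r₀ with hB_def
  have hBpos : ∀ n, 0 < B n := by
    intro n; simp only [hB_def]; positivity
  have hNbound : ∀ n, ∀ z ∈ closedBall (0:ℂ) (2 * R n), ‖Nf n z‖ ≤ B n := by
    intro n z hz
    have h2R : (0:ℝ) < 2 * R n := by have := hRpos n; linarith
    have hb : Bornology.IsBounded (ball (0:ℂ) (2 * R n)) := isBounded_ball
    have hd : DiffContOnCl ℂ (Nf n) (ball (0:ℂ) (2 * R n)) := (hNdiff n).diffContOnCl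
    have hfr : ∀ w ∈ frontier (ball (0:ℂ) (2 * R n)), ‖Nf n w‖ ≤ B n := by
      intro w hw
      rw [frontier_ball _ h2R.ne'] at hw
      have hwn : ‖w‖ = 2 * R n := by
        have := mem_sphere_iff_norm.mp hw
        simpa using this
      have hlow : (P n : ℝ) ≤ ‖qprod (M n) w‖ := by
        apply qprod_lower
        intro t ht
        refine ⟨(hMt n t ht).1, ?_⟩
        have h2 := (hMt n t ht).2
        rw [hwn]
        have hR := hRpos n
        nlinarith
      have hup := hgrow w
      rw [hwn] at hup
      have hPG : (P n : ℝ) * ‖G n w‖ ≤ ‖φ w‖ := by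
        calc (P n : ℝ) * ‖G n w‖ ≤ ‖qprod (M n) w‖ * ‖G n w‖ :=
              mul_le_mul_of_nonneg_right hlow (norm_nonneg _)
          _ = ‖φ w‖ := by rw [← norm_mul, ← hid n w]
      have hnorm : ‖Nf n w‖ = (P n : ℝ) * ‖G n w‖ / r₀ := by
        simp only [hNf_def]
        rw [norm_div, norm_mul, hφ0eq]
        rw [Complex.norm_real, Real.norm_eq_abs, _root_.abs_of_pos (hPpos n),
          Complex.norm_real, Real.norm_eq_abs, _root_.abs_of_pos hr₀pos]
      rw [hnorm]
      simp only [hB_def]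
      rw [div_le_div_iff₀ hr₀pos hr₀pos]
      have := hPG.trans hup
      nlinarith [hr₀pos]
    have hcl : z ∈ closure (ball (0:ℂ) (2 * R n)) := by
      rw [closure_ball _ h2R.ne']
      exact hz
    exact Complex.norm_le_of_forall_mem_frontier_norm_le hb hd hfr hcl
  -- logarithm
  have HL : ∀ n : ℕ, ∃ h : ℂ → ℂ,
      (∀ z ∈ ball (0:ℂ) (R n), HasDerivAt h (deriv (Nf n) z / Nf n z) z) ∧ h 0 = 0 ∧
      (∀ z ∈ ball (0:ℂ) (R n), Complex.exp (h z) = Nf n z) := by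
    intro n
    apply exists_log (hRpos n) (hNdiff n) _ (hN0 n)
    intro z hz
    exact hNnz n z (ball_subset_closedBall hz)
  choose hh hhd hh0 hhexp using HL
  -- Re h ≤ A n
  set A : ℕ → ℝ := fun n => |Real.log C| + |Real.log r₀| + (2 * R n) ^ (3/2 : ℝ) with hA_def
  have hAnonneg : ∀ n, 0 ≤ A n := by
    intro n
    simp only [hA_def]
    have : (0:ℝ) ≤ (2 * R n) ^ (3/2 : ℝ) := by positivity
    positivity
  have hre : ∀ n, ∀ z ∈ ball (0:ℂ) (R n), (hh n z).re ≤ A n := by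
    intro n z hz
    have hexp := hhexp n z hz
    have h1 : Real.exp ((hh n z).re) = ‖Nf n z‖ := by
      rw [← hexp, Complex.norm_exp]
    have h2 : ‖Nf n z‖ ≤ B n := by
      apply hNbound n z
      rw [mem_closedBall_zero_iff]
      have h3 := mem_ball_zero_iff.mp hz
      have h4 := hRpos n
      linarith
    have h3 : Real.exp ((hh n z).re) ≤ B n := by rw [h1]; exact h2
    have h4 : (hh n z).re ≤ Real.log (B n) := by
      rw [← Real.log_exp ((hh n z).re)]
      exact Real.log_le_log (Real.exp_pos _) h3
    apply h4.trans
    simp only [hB_def, hA_def]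
    rw [Real.log_div (by positivity) hr₀pos.ne', Real.log_mul hC.ne' (Real.exp_pos _).ne',
      Real.log_exp]
    have l1 : Real.log C ≤ |Real.log C| := le_abs_self _
    have l2 : -Real.log r₀ ≤ |Real.log r₀| := neg_le_abs _
    linarith
  -- derivative of h at 0 vanishes
  have hhd0 : ∀ n, deriv (hh n) 0 = 0 := by
    intro n
    have h1 := hhd n 0 (mem_ball_self (hRpos n))
    rw [deriv_even_zero (hNdiff n) (hNeven n)] at h1
    rw [zero_div] at h1
    exact h1.deriv
  -- BC smallness
  set δ : ℕ → ℝ := fun n => 8 * (A n + 1) / (R n) ^ 2 with hδ_def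
  have hsmall : ∀ n, ∀ z : ℂ, ‖z‖ ≤ 1 → ‖hh n z‖ ≤ δ n := by
    intro n
    apply bc_small (hR2 n) (hAnonneg n) _ (hh0 n) (hhd0 n) (hre n)
    intro z hz
    exact ((hhd n z hz).differentiableAt).differentiableWithinAt
  have hδ0 : Tendsto δ atTop (𝓝 0) := by
    have hRat : Tendsto (fun n : ℕ => R n) atTop atTop := by
      simp only [hR_def]
      apply Filter.Tendsto.const_mul_atTop (by norm_num : (0:ℝ) < 4)
      apply tendsto_atTop_add_const_right
      exact tendsto_natCast_atTop_atTop
    have hR2at : Tendsto (fun n : ℕ => (R n)^2) atTop atTop :=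
      (tendsto_pow_atTop (two_ne_zero)).comp hRat
    have h1 : Tendsto (fun n => 8*(|Real.log C| + |Real.log r₀| + 1) / (R n)^2) atTop (𝓝 0) :=
      tendsto_const_nhds.div_atTop hR2at
    have h2 : Tendsto (fun n => 8 * (2 * R n) ^ ((3:ℝ)/2) / (R n)^2) atTop (𝓝 0) := by
      have key : ∀ n, 8 * (2 * R n) ^ ((3:ℝ)/2) / (R n)^2
          = 8 * 2 ^ ((3:ℝ)/2) * (R n) ^ (-(1/2) : ℝ) := by
        intro n
        have hR := hRpos n
        rw [Real.mul_rpow (by norm_num) hR.le]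
        have e1 : (R n)^(2:ℕ) = (R n) ^ ((2:ℕ):ℝ) := (Real.rpow_natCast (R n) 2).symm
        rw [e1]
        rw [div_eq_mul_inv, ← Real.rpow_neg hR.le]
        rw [mul_assoc, mul_assoc, ← Real.rpow_add hR]
        norm_num
        ring
      have heq2 : (fun n => 8 * (2 * R n) ^ ((3:ℝ)/2) / (R n)^2)
          = fun n => 8 * 2 ^ ((3:ℝ)/2) * (R n) ^ (-(1/2) : ℝ) := funext key
      rw [heq2]
      have h3 : Tendsto (fun x : ℝ => x ^ (-(1/2) : ℝ)) atTop (𝓝 0) :=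
        tendsto_rpow_neg_atTop (by norm_num)
      have h4 := (h3.comp hRat).const_mul (8 * 2 ^ ((3:ℝ)/2))
      simpa [mul_assoc] using h4
    have heq : δ = fun n => 8*(|Real.log C| + |Real.log r₀| + 1) / (R n)^2
        + 8 * (2 * R n) ^ ((3:ℝ)/2) / (R n)^2 := by
      funext n
      simp only [hδ_def, hA_def]
      have hRn := hRpos n
      have h2R32 : (2 * R n) ^ ((3:ℝ)/2) = (2 * R n) ^ ((3/2 : ℝ)) := by norm_num
      field_simp
      ring
    rw [heq]
    have := h1.add h2
    simpa using this
  have hδnonneg : ∀ n, 0 ≤ δ n := by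
    intro n
    have := hsmall n 0 (by simp)
    have h2 := norm_nonneg (hh n 0)
    linarith
  -- N converges to 1 uniformly on closedBall 0 1
  have hNconv : ∀ n, ∀ z ∈ closedBall (0:ℂ) 1, δ n ≤ 1 → ‖Nf n z - 1‖ ≤ 2 * δ n := by
    intro n z hz hδ1
    have hz1 : ‖z‖ ≤ 1 := mem_closedBall_zero_iff.mp hz
    have hzball : z ∈ ball (0:ℂ) (R n) := by
      rw [mem_ball_zero_iff]
      have := hR2 n; linarith
    rw [← hhexp n z hzball]
    have h1 : ‖hh n z‖ ≤ 1 := by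
      have := hsmall n z hz1
      linarith
    have h2 := Complex.norm_exp_sub_one_le h1
    have h3 := hsmall n z hz1
    calc ‖Complex.exp (hh n z) - 1‖ ≤ 2 * ‖hh n z‖ := h2
      _ ≤ 2 * δ n := by linarith
  -- p n = qprod / P converges uniformly to φ / φ 0 on closedBall 0 1
  set p : ℕ → ℂ → ℂ := fun n z => qprod (M n) z / ((P n : ℝ) : ℂ) with hp_def
  have hpdiff : ∀ n, Differentiable ℂ (p n) := by
    intro n
    exact (qprod_diff (M n)).div_const _
  have hpid : ∀ n, ∀ z ∈ closedBall (0:ℂ) 1, p n z * Nf n z = φ z / φ 0 := by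
    intro n z _
    simp only [hp_def, hNf_def]
    have hP0 : ((P n : ℝ) : ℂ) ≠ 0 := by exact_mod_cast (hPpos n).ne'
    rw [div_mul_div_comm, div_eq_div_iff (mul_ne_zero hP0 hphi0) hphi0]
    linear_combination (-(((P n : ℝ) : ℂ) * φ 0)) * (hid n z)
  have hpconv : TendstoUniformlyOn p (fun z => φ z / φ 0) atTop (closedBall (0:ℂ) 1) := by
    rw [Metric.tendstoUniformlyOn_iff]
    intro ε hε
    obtain ⟨Cφ, hCφ0, hCφ⟩ : ∃ Cφ : ℝ, 0 ≤ Cφ ∧ ∀ z ∈ closedBall (0:ℂ) 1, ‖φ z / φ 0‖ ≤ Cφ := by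
      obtain ⟨Cφ, hCφ⟩ := (isCompact_closedBall (0:ℂ) 1).exists_bound_of_continuousOn
        ((hφ.continuous.div_const _).continuousOn)
      exact ⟨max Cφ 0, le_max_right _ _, fun z hz => (hCφ z hz).trans (le_max_left _ _)⟩
    have hminpos : 0 < min (1/4 : ℝ) (ε/(4*(Cφ+1))) := by
      apply lt_min (by norm_num)
      positivity
    have hev : ∀ᶠ n in atTop, δ n < min (1/4 : ℝ) (ε/(4*(Cφ+1))) := by
      exact hδ0.eventually_lt_const hminpos
    filter_upwards [hev] with n hn
    intro z hz
    rw [dist_eq_norm]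
    have hδ4 : δ n ≤ 1/4 := (hn.trans_le (min_le_left _ _)).le
    have hδε : δ n < ε/(4*(Cφ+1)) := hn.trans_le (min_le_right _ _)
    have hN1 := hNconv n z hz (by linarith)
    have hNlow : (1:ℝ)/2 ≤ ‖Nf n z‖ := by
      have h4 := norm_sub_norm_le (1:ℂ) (1 - Nf n z)
      have h5 : (1:ℂ) - (1 - Nf n z) = Nf n z := by ring
      rw [h5, norm_one] at h4
      have h6 : ‖1 - Nf n z‖ = ‖Nf n z - 1‖ := norm_sub_rev _ _
      rw [h6] at h4
      linarith
    have hNz : Nf n z ≠ 0 := by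
      intro h0
      rw [h0, norm_zero] at hNlow
      linarith
    have hp1 := hpid n z hz
    have hkey : φ z / φ 0 - p n z = (φ z / φ 0) * ((Nf n z - 1) / Nf n z) := by
      rw [mul_div_assoc']
      rw [eq_div_iff hNz]
      linear_combination (-1:ℂ) * hp1
    calc ‖φ z / φ 0 - p n z‖ = ‖φ z / φ 0‖ * (‖Nf n z - 1‖ / ‖Nf n z‖) := by
          rw [hkey, norm_mul, norm_div, norm_div]
      _ ≤ Cφ * ((2 * δ n) / (1/2)) := by
          apply mul_le_mul (hCφ z hz) _ _ hCφ0
          · apply div_le_div₀ (by linarith [hδnonneg n]) hN1 (by norm_num) hNlow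
          · positivity
      _ = 4 * Cφ * δ n := by ring
      _ < ε := by
          have h7 : 4 * Cφ * δ n ≤ 4 * (Cφ + 1) * δ n := by
            have := hδnonneg n
            nlinarith
          have h8 : 4 * (Cφ + 1) * δ n < 4 * (Cφ + 1) * (ε/(4*(Cφ+1))) := by
            apply mul_lt_mul_of_pos_left hδε
            positivity
          have h9 : 4 * (Cφ + 1) * (ε/(4*(Cφ+1))) = ε := by
            field_simp
          linarith
  -- pass to derivatives at 0
  intro l
  have hTLU : TendstoLocallyUniformlyOn p (fun z => φ z / φ 0) atTop (ball (0:ℂ) 1) :=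
    (hpconv.mono ball_subset_closedBall).tendstoLocallyUniformlyOn
  have hlim := tendsto_iteratedDeriv_at_zero hpdiff (hφ.div_const _) hTLU l
  -- each coefficient is a nonnegative real
  have hmem : ∀ n, (iteratedDeriv l (p n) 0).im = 0 ∧ 0 ≤ (iteratedDeriv l (p n) 0).re := by
    intro n
    have h1 : p n = fun z => (qpoly (M n)).eval z / ((P n : ℝ) : ℂ) := by
      funext z
      simp only [hp_def, qpoly_eval]
    have h2 : iteratedDeriv l (p n) 0
        = ((l.factorial : ℂ) * (qpoly (M n)).coeff l) / ((P n : ℝ) : ℂ) := by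
      rw [h1, iteratedDeriv_div_const ((qpoly (M n)).differentiable) _ l 0,
        iteratedDeriv_polyeval l]
    obtain ⟨him', hre'⟩ := NN_qpoly (fun t ht => (hMt n t ht).1) l
    have h3 : (qpoly (M n)).coeff l = (((qpoly (M n)).coeff l).re : ℂ) := by
      apply Complex.ext <;> simp [him']
    rw [h2, h3]
    have h4 : ((l.factorial : ℂ) * (((qpoly (M n)).coeff l).re : ℂ)) / ((P n : ℝ) : ℂ)
        = (((l.factorial * ((qpoly (M n)).coeff l).re / P n : ℝ)) : ℂ) := by
      push_cast
      ring
    rw [h4]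
    constructor
    · simp
    · simp only [Complex.ofReal_re]
      apply div_nonneg _ (hPpos n).le
      apply mul_nonneg (Nat.cast_nonneg _) hre'
  -- limit is in the closed set of nonneg reals
  have hS : IsClosed {z : ℂ | z.im = 0 ∧ 0 ≤ z.re} :=
    (isClosed_eq Complex.continuous_im continuous_const).inter
      (isClosed_le continuous_const Complex.continuous_re)
  have hLmem : (iteratedDeriv l φ 0 / φ 0).im = 0 ∧ 0 ≤ (iteratedDeriv l φ 0 / φ 0).re := by
    have h5 : iteratedDeriv l (fun z => φ z / φ 0) 0 = iteratedDeriv l φ 0 / φ 0 :=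
      iteratedDeriv_div_const hφ _ l 0
    rw [h5] at hlim
    have := hS.mem_of_tendsto hlim (Filter.Eventually.of_forall hmem)
    exact this
  -- unfold
  obtain ⟨him2, hre2⟩ := hLmem
  have hL : iteratedDeriv l φ 0 = φ 0 * (iteratedDeriv l φ 0 / φ 0) := by
    field_simp
  rw [hL]
  have h6 : (φ 0).im = 0 := by rw [hφ0eq]; simp
  have h7 : (φ 0).re = r₀ := by rw [hφ0eq]; simp
  constructor
  · rw [Complex.mul_im, him2, h6]
    ring
  · rw [Complex.mul_re, him2, h6, h7]
    simp only [mul_zero, sub_zero]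
    exact mul_nonneg hr₀pos.le hre2


lemma iteratedDeriv_id_mul {ψ : ℂ → ℂ} (hψ : Differentiable ℂ ψ) :
    ∀ (n : ℕ) (x : ℂ), iteratedDeriv (n+1) (fun z => z * ψ z) x
      = ((n:ℂ)+1) * iteratedDeriv n ψ x + x * iteratedDeriv (n+1) ψ x := by
  intro n
  induction n with
  | zero =>
      intro x
      rw [iteratedDeriv_one]
      have h1 : HasDerivAt (fun z => z * ψ z) (1 * ψ x + x * deriv ψ x) x :=
        (hasDerivAt_id x).mul (hψ x).hasDerivAt
      rw [h1.deriv]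
      simp only [iteratedDeriv_zero, Nat.cast_zero]
      rw [iteratedDeriv_one]
      ring
  | succ n ih =>
      intro x
      rw [iteratedDeriv_succ]
      have hfun : iteratedDeriv (n+1) (fun z => z * ψ z)
          = fun y => ((n:ℂ)+1) * iteratedDeriv n ψ y + y * iteratedDeriv (n+1) ψ y :=
        funext ih
      rw [hfun]
      have hd1 : HasDerivAt (fun y => ((n:ℂ)+1) * iteratedDeriv n ψ y)
          (((n:ℂ)+1) * iteratedDeriv (n+1) ψ x) x := by
        have := ((iteratedDeriv_entire hψ n) x).hasDerivAt
        have h2 := this.const_mul ((n:ℂ)+1)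
        rwa [← iteratedDeriv_succ] at h2
      have hd2 : HasDerivAt (fun y => y * iteratedDeriv (n+1) ψ y)
          (1 * iteratedDeriv (n+1) ψ x + x * iteratedDeriv (n+2) ψ x) x := by
        have h3 := (hasDerivAt_id x).mul ((iteratedDeriv_entire hψ (n+1)) x).hasDerivAt
        rwa [← iteratedDeriv_succ] at h3
      have := (hd1.add hd2).deriv
      erw [this]
      push_cast
      ring

theorem main_aux : ∀ l : ℕ, ∀ (φ : ℂ → ℂ), Differentiable ℂ φ →
    (∃ ε : ℂ, (ε = 1 ∨ ε = -1) ∧ ∀ s : ℂ, φ (-s) = ε * φ s) →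
    (∃ s₀ : ℝ, ∀ s : ℝ, s₀ ≤ s → ∃ r : ℝ, 0 < r ∧ φ s = r) →
    (∃ C : ℝ, 0 < C ∧ ∀ s : ℂ, ‖φ s‖ ≤ C * Real.exp (‖s‖ ^ (3/2 : ℝ))) →
    (∀ s : ℂ, φ s = 0 → s.re = 0) →
    (iteratedDeriv l φ 0).im = 0 ∧ 0 ≤ (iteratedDeriv l φ 0).re := by
  intro l
  induction l using Nat.strong_induction_on with
  | _ l IH =>
    rintro φ hφ ⟨ε, hε, hsym⟩ ⟨s₀, hpos⟩ ⟨C, hC, hgrow⟩ hzeros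
    by_cases hφ0 : φ 0 = 0
    · -- strip one factor of z
      rcases Nat.eq_zero_or_pos l with rfl | hl
      · rw [iteratedDeriv_zero, hφ0]
        simp
      obtain ⟨k, rfl⟩ : ∃ k, l = k + 1 := ⟨l - 1, by omega⟩
      obtain ⟨hψd, hψid'⟩ := factor_one hφ 0
      set ψ : ℂ → ℂ := dslope φ 0 with hψ_def
      have hψid : ∀ z, φ z = z * ψ z := by
        intro z
        have := hψid' hφ0 z
        rwa [sub_zero] at this
      -- symmetry with -ε
      have hψsym : ∀ z, ψ (-z) = -ε * ψ z := by
        apply eq_of_eq_off_pair (a := 0) (b := 0)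
        · exact hψd.continuous.comp continuous_neg
        · exact continuous_const.mul hψd.continuous
        intro z hz _
        have h1 : (-z) * ψ (-z) = ε * (z * ψ z) := by
          rw [← hψid, ← hψid, hsym]
        have h2 : (-z) * ψ (-z) = (-z) * (-ε * ψ z) := by
          rw [h1]; ring
        exact mul_left_cancel₀ (neg_ne_zero.mpr hz) h2
      -- positivity
      have hψpos : ∀ s : ℝ, max s₀ 1 ≤ s → ∃ r : ℝ, 0 < r ∧ ψ s = r := by
        intro s hs
        have hs₀ : s₀ ≤ s := le_trans (le_max_left _ _) hs
        have hs1 : (1:ℝ) ≤ s := le_trans (le_max_right _ _) hs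
        obtain ⟨r, hr, hφs⟩ := hpos s hs₀
        refine ⟨r / s, by positivity, ?_⟩
        have h1 : (s:ℂ) * ψ s = (r:ℂ) := by rw [← hψid, hφs]
        have hs0 : (s:ℂ) ≠ 0 := by
          simp only [ne_eq, Complex.ofReal_eq_zero]
          linarith
        have h2 : ψ (s:ℂ) = (r:ℂ) / (s:ℂ) := by
          rw [eq_div_iff hs0]
          rw [mul_comm] at h1
          exact h1
        rw [h2]
        push_cast
        ring
      -- growth
      obtain ⟨Cb, hCb⟩ := (isCompact_closedBall (0:ℂ) 1).exists_bound_of_continuousOn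
        hψd.continuous.continuousOn
      have hψgrow : ∀ z : ℂ, ‖ψ z‖ ≤ (C + max Cb 0 + 1) * Real.exp (‖z‖ ^ (3/2 : ℝ)) := by
        intro z
        have hexp1 : (1:ℝ) ≤ Real.exp (‖z‖ ^ (3/2 : ℝ)) := by
          rw [Real.one_le_exp_iff]
          positivity
        rcases le_or_gt ‖z‖ 1 with hz1 | hz1
        · have h1 : ‖ψ z‖ ≤ max Cb 0 := by
            exact le_trans (hCb z (mem_closedBall_zero_iff.mpr hz1)) (le_max_left _ _)
          calc ‖ψ z‖ ≤ max Cb 0 := h1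
            _ = max Cb 0 * 1 := (mul_one _).symm
            _ ≤ (C + max Cb 0 + 1) * Real.exp (‖z‖ ^ (3/2 : ℝ)) := by
                apply mul_le_mul _ hexp1 zero_le_one _
                · linarith
                · have : (0:ℝ) ≤ max Cb 0 := le_max_right _ _
                  linarith
        · have h1 : ‖ψ z‖ ≤ ‖φ z‖ := by
            have h2 : ‖φ z‖ = ‖z‖ * ‖ψ z‖ := by rw [hψid z, norm_mul]
            rw [h2]
            nlinarith [norm_nonneg (ψ z)]
          calc ‖ψ z‖ ≤ ‖φ z‖ := h1
            _ ≤ C * Real.exp (‖z‖ ^ (3/2 : ℝ)) := hgrow z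
            _ ≤ (C + max Cb 0 + 1) * Real.exp (‖z‖ ^ (3/2 : ℝ)) := by
                apply mul_le_mul_of_nonneg_right _ (Real.exp_pos _).le
                have : (0:ℝ) ≤ max Cb 0 := le_max_right _ _
                linarith
      -- zeros
      have hψzeros : ∀ s : ℂ, ψ s = 0 → s.re = 0 := by
        intro s hs
        rcases eq_or_ne s 0 with rfl | hs0
        · simp
        · apply hzeros
          rw [hψid s, hs, mul_zero]
      -- apply induction
      have hεψ : (-ε = 1 ∨ -ε = -1) := by
        rcases hε with h | h
        · right; rw [h]
        · left; rw [h]; ring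
      have hIH := IH k (by omega) ψ hψd ⟨-ε, hεψ, hψsym⟩ ⟨max s₀ 1, hψpos⟩
        ⟨C + max Cb 0 + 1, by positivity, hψgrow⟩ hψzeros
      -- transfer
      have heq : iteratedDeriv (k+1) φ 0 = ((k:ℂ)+1) * iteratedDeriv k ψ 0 := by
        have hfun : φ = fun z => z * ψ z := funext hψid
        rw [hfun, iteratedDeriv_id_mul hψd k 0]
        ring
      rw [heq]
      obtain ⟨him, hre⟩ := hIH
      constructor
      · rw [Complex.mul_im]
        have h1 : (((k:ℂ)+1)).im = 0 := by simp
        have h2 : (((k:ℂ)+1)).re = (k:ℝ)+1 := by simp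
        rw [him, h1, h2]
        ring
      · rw [Complex.mul_re]
        have h1 : (((k:ℂ)+1)).im = 0 := by simp
        have h2 : (((k:ℂ)+1)).re = (k:ℝ)+1 := by simp
        rw [him, h1, h2]
        have : (0:ℝ) ≤ ((k:ℝ)+1) * (iteratedDeriv k ψ 0).re := by
          apply mul_nonneg _ hre
          positivity
        linarith
    · -- φ 0 ≠ 0 forces ε = 1
      have hε1 : ε = 1 := by
        rcases hε with h | h
        · exact h
        · exfalso
          have := hsym 0
          rw [neg_zero, h] at this
          apply hφ0
          have h2 : φ 0 - (-1) * φ 0 = 0 := by rw [← this]; ring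
          have h3 : (2:ℂ) * φ 0 = 0 := by linear_combination h2
          have := mul_eq_zero.mp h3
          rcases this with h4 | h4
          · norm_num at h4
          · exact h4
      have heven : ∀ z, φ (-z) = φ z := by
        intro z
        rw [hsym z, hε1, one_mul]
      exact core_even hφ heven hpos hC hgrow hzeros hφ0 l


end YZ

/-- **Yun–Zhang positivity (Proposition B.1, part 1).**
Let `φ : ℂ → ℂ` be an entire function such that:
(1) `φ(-s) = ε·φ(s)` for some `ε ∈ {1, -1}`;
(2) `φ(s)` is a positive real number for all sufficiently large real `s`;
(3) `φ` has order at most `1`;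
(4) all zeros of `φ` lie on the imaginary axis.
Then every iterated derivative `φ^{(l)}(0)` is a nonnegative real number. -/
theorem yun_zhang_nonneg
    (φ : ℂ → ℂ) (hdiff : Differentiable ℂ φ)
    (hsym : ∃ ε : ℂ, (ε = 1 ∨ ε = -1) ∧ ∀ s : ℂ, φ (-s) = ε * φ s)
    (hpos : ∃ s₀ : ℝ, ∀ s : ℝ, s₀ ≤ s → ∃ r : ℝ, 0 < r ∧ φ s = r)
    (horder : ∀ ρ : ℝ, 1 < ρ → ∃ C : ℝ, 0 < C ∧ ∀ s : ℂ, ‖φ s‖ ≤ C * Real.exp (‖s‖ ^ ρ))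
    (hzeros : ∀ s : ℂ, φ s = 0 → s.re = 0) :
    ∀ l : ℕ, (iteratedDeriv l φ 0).im = 0 ∧ 0 ≤ (iteratedDeriv l φ 0).re := by
  intro l
  obtain ⟨C, hC, hgrow⟩ := horder (3/2 : ℝ) (by norm_num)
  exact YZ.main_aux l φ hdiff hsym hpos ⟨C, hC, hgrow⟩ hzeros
end

section
/- Let h ≥ 1 and n be integers with 0 ≤ n ≤ h, and let X be a real number with log X ≥ h³·e^{γ+1}, where γ is the Euler–Mascheroni constant. For each integer t ≥ 1 set S_t = Σ ((−1)^{k₁+k₂+⋯+k_t})/(k₁!·k₂!⋯k_t!) · γ^{k₁}·(ζ(2)/2)^{k₂}·(ζ(3)/3)^{k₃}⋯(ζ(t)/t)^{k_t}, the sum ranging over all t-tuples (k₁, …, k_t) of nonnegative integers with k₁ + 2k₂ + ⋯ + t·k_t = t. Then the complex number (log X)^{n} + Σ_{t=1}^{n} (n!/(n−t)!)·(log X)^{n−t}·S_t is a positive real number: its imaginary part is zero and its real part is strictly positive. -/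
open Finset

noncomputable def St (t : ℕ) : ℂ :=
  ∑ k ∈ Finset.filter (fun k : Fin t → ℕ => ∑ j : Fin t, ((j : ℕ) + 1) * k j = t)
      (Fintype.piFinset fun _ => Finset.range (t + 1)),
    ((-1 : ℂ) ^ (∑ j, k j)) / (∏ j, ((k j).factorial : ℂ)) *
      ∏ j : Fin t,
        (if (j : ℕ) = 0 then (Real.eulerMascheroniConstant : ℂ)
          else riemannZeta ((j : ℕ) + 1) / ((j : ℕ) + 1)) ^ (k j)

/-!
Every `ζ(k)` with `k ≥ 2` is real, so `S_t` is real. Its coefficients `a₁ = γ` and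
`a_k = ζ(k)/k` lie in `[0, 1]`, so dropping the signs and the weight condition bounds `|S_t|` by
`∏_k Σ_j a_k^j/j! ≤ e^{a₁+⋯+a_t} ≤ e^t`. With `L = log X`, the `t`-th term of the sum is then at
most `(n e)^t L^{n-t} ≤ n e L^{n-1}`, because `n e ≤ L`; the `n` terms together stay below
`n² e L^{n-1} < L^n`, since `L ≥ h³ e^{γ+1} > n² e`.
-/

open Real Nat

-- The `n = 0` term is `1 / 0 = 0`.
noncomputable def zetaNat (k : ℕ) : ℝ := ∑' n : ℕ, 1 / (n : ℝ) ^ k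

lemma riemannZeta_natCast_eq_ofReal_zetaNat {k : ℕ} (hk : 1 < k) :
    riemannZeta k = (zetaNat k : ℂ) := by
  rw [zeta_nat_eq_tsum_of_gt_one hk, zetaNat, Complex.ofReal_tsum]
  push_cast
  rfl

lemma zetaNat_nonneg (k : ℕ) : 0 ≤ zetaNat k :=
  tsum_nonneg fun _ => by positivity

lemma zetaNat_le_pi_sq_div_six {k : ℕ} (hk : 2 ≤ k) : zetaNat k ≤ π ^ 2 / 6 := by
  refine hasSum_le (fun n => ?_) (Real.summable_one_div_nat_pow.mpr (by omega)).hasSum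
    hasSum_zeta_two
  rcases n.eq_zero_or_pos with rfl | hn
  · simp [zero_pow (by omega : k ≠ 0)]
  · exact one_div_le_one_div_of_le (by positivity)
      (pow_le_pow_right₀ (by exact_mod_cast hn) hk)

noncomputable def stCoeff (j : ℕ) : ℝ :=
  if j = 0 then eulerMascheroniConstant else zetaNat (j + 1) / (j + 1)

lemma stCoeff_nonneg (j : ℕ) : 0 ≤ stCoeff j := by
  unfold stCoeff
  split
  · exact one_half_lt_eulerMascheroniConstant.le.trans' (by norm_num)
  · exact div_nonneg (zetaNat_nonneg _) (by positivity)

lemma stCoeff_le_one (j : ℕ) : stCoeff j ≤ 1 := by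
  unfold stCoeff
  split_ifs with hj
  · linarith [eulerMascheroniConstant_lt_two_thirds]
  · have hpi : π ^ 2 / 6 ≤ 2 := by nlinarith [pi_lt_d2, pi_pos]
    have hj2 : (2 : ℝ) ≤ j + 1 := by exact_mod_cast (by omega : 2 ≤ j + 1)
    rw [div_le_one (by positivity)]
    linarith [zetaNat_le_pi_sq_div_six (k := j + 1) (by omega)]

lemma ofReal_stCoeff (j : ℕ) :
    ((stCoeff j : ℝ) : ℂ) = if j = 0 then (eulerMascheroniConstant : ℂ)
      else riemannZeta ((j : ℂ) + 1) / ((j : ℂ) + 1) := by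
  unfold stCoeff
  split_ifs with hj
  · rfl
  · have := riemannZeta_natCast_eq_ofReal_zetaNat (k := j + 1) (by omega)
    push_cast at this ⊢
    rw [this]

section ExpBound

variable {ι : Type*} [Fintype ι] [DecidableEq ι] {a : ι → ℝ}

lemma sum_piFinset_prod_pow_div_factorial_le_exp (ha : ∀ i, 0 ≤ a i) (m : ℕ) :
    ∑ k ∈ Fintype.piFinset (fun _ : ι => range m), ∏ i, a i ^ k i / (k i)! ≤
      exp (∑ i, a i) := by
  calc _ = ∏ i, ∑ j ∈ range m, a i ^ j / j ! := (prod_univ_sum _ _).symm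
    _ ≤ ∏ i, exp (a i) :=
        prod_le_prod (fun i _ => sum_nonneg fun j _ => by have := ha i; positivity)
          fun i _ => sum_le_exp_of_nonneg (ha i) m
    _ = exp (∑ i, a i) := (exp_sum _ _).symm

lemma abs_sum_neg_one_pow_div_prod_factorial_le_exp (ha : ∀ i, 0 ≤ a i) {m : ℕ}
    {s : Finset (ι → ℕ)} (hs : s ⊆ Fintype.piFinset fun _ => range m) :
    |∑ k ∈ s, (-1 : ℝ) ^ (∑ i, k i) / (∏ i, ((k i)! : ℝ)) * ∏ i, a i ^ k i| ≤
      exp (∑ i, a i) := by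
  have hterm (k : ι → ℕ) : |(-1 : ℝ) ^ (∑ i, k i) / (∏ i, ((k i)! : ℝ)) * ∏ i, a i ^ k i| =
      ∏ i, a i ^ k i / (k i)! := by
    rw [abs_mul, abs_div, abs_pow, abs_neg, abs_one, one_pow, prod_div_distrib,
      abs_of_nonneg (by positivity), abs_of_nonneg (prod_nonneg fun i _ => pow_nonneg (ha i) _)]
    ring
  calc _ ≤ ∑ k ∈ s, ∏ i, a i ^ k i / (k i)! :=
        (abs_sum_le_sum_abs _ s).trans_eq (sum_congr rfl fun k _ => hterm k)
    _ ≤ ∑ k ∈ Fintype.piFinset (fun _ : ι => range m), ∏ i, a i ^ k i / (k i)! :=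
        sum_le_sum_of_subset_of_nonneg hs fun k _ _ =>
          prod_nonneg fun i _ => by have := ha i; positivity
    _ ≤ exp (∑ i, a i) := sum_piFinset_prod_pow_div_factorial_le_exp ha m

end ExpBound

noncomputable def realSt (t : ℕ) : ℝ :=
  ∑ k ∈ Finset.filter (fun k : Fin t → ℕ => ∑ j : Fin t, ((j : ℕ) + 1) * k j = t)
      (Fintype.piFinset fun _ => Finset.range (t + 1)),
    (-1 : ℝ) ^ (∑ j, k j) / (∏ j, ((k j)! : ℝ)) * ∏ j : Fin t, stCoeff j ^ k j

lemma St_eq_ofReal_realSt (t : ℕ) : St t = realSt t := by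
  simp only [St, realSt, ← ofReal_stCoeff]
  push_cast
  rfl

lemma abs_realSt_le (t : ℕ) : |realSt t| ≤ exp 1 ^ t := by
  calc |realSt t| ≤ exp (∑ j : Fin t, stCoeff j) :=
        abs_sum_neg_one_pow_div_prod_factorial_le_exp (a := fun j : Fin t => stCoeff j)
          (fun j => stCoeff_nonneg j) (filter_subset _ _)
    _ ≤ exp t := by
        gcongr
        exact (sum_le_sum fun (j : Fin t) (_ : j ∈ univ) => stCoeff_le_one j).trans_eq (by simp)
    _ = exp 1 ^ t := (exp_one_pow t).symm

lemma pow_mul_pow_sub_le {x L : ℝ} (hx : 0 ≤ x) (hxL : x ≤ L) {n t : ℕ} (ht : 1 ≤ t)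
    (htn : t ≤ n) : x ^ t * L ^ (n - t) ≤ x * L ^ (n - 1) := by
  obtain ⟨s, rfl⟩ := Nat.exists_eq_add_of_le' ht
  have hL : 0 ≤ L := hx.trans hxL
  calc x ^ (s + 1) * L ^ (n - (s + 1)) = x * (x ^ s * L ^ (n - (s + 1))) := by ring
    _ ≤ x * (L ^ s * L ^ (n - (s + 1))) := by gcongr
    _ = x * L ^ (n - 1) := by rw [← pow_add]; congr 2; omega

lemma abs_sum_factorial_div_mul_pow_mul_lt {n : ℕ} {L c : ℝ} {S : ℕ → ℝ}
    (hS : ∀ t, |S t| ≤ c ^ t) (hL : (n : ℝ) ^ 2 * c < L) :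
    |∑ t ∈ Icc 1 n, ((n ! : ℝ) / (n - t)!) * L ^ (n - t) * S t| < L ^ n := by
  rcases n.eq_zero_or_pos with rfl | hn
  · simp
  have hc : 0 ≤ c := (abs_nonneg _).trans (by simpa using hS 1)
  have hn1 : (1 : ℝ) ≤ n := by exact_mod_cast hn
  have hL0 : 0 < L := lt_of_le_of_lt (by positivity) hL
  have hncL : n * c ≤ L := calc
    (n : ℝ) * c ≤ n ^ 2 * c := by gcongr; nlinarith
    _ ≤ L := hL.le
  have hterm (t : ℕ) (ht : t ∈ Icc 1 n) :
      |((n ! : ℝ) / (n - t)!) * L ^ (n - t) * S t| ≤ n * c * L ^ (n - 1) := by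
    obtain ⟨ht1, htn⟩ := mem_Icc.mp ht
    have hdesc : (n ! : ℝ) / (n - t)! = n.descFactorial t := by
      rw [div_eq_iff (by positivity), ← Nat.factorial_mul_descFactorial htn]
      push_cast
      ring
    have hdesc_le : (n.descFactorial t : ℝ) ≤ n ^ t := by
      exact_mod_cast n.descFactorial_le_pow t
    rw [hdesc, abs_mul, abs_mul, abs_of_nonneg (by positivity), abs_of_nonneg (by positivity)]
    calc (n.descFactorial t : ℝ) * L ^ (n - t) * |S t| ≤ n ^ t * L ^ (n - t) * c ^ t := by
          gcongr
          exact hS t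
      _ = (n * c) ^ t * L ^ (n - t) := by ring
      _ ≤ n * c * L ^ (n - 1) := pow_mul_pow_sub_le (by positivity) hncL ht1 htn
  calc _ ≤ ∑ t ∈ Icc 1 n, n * c * L ^ (n - 1) := (abs_sum_le_sum_abs _ _).trans (sum_le_sum hterm)
    _ = (n : ℝ) ^ 2 * c * L ^ (n - 1) := by
        rw [sum_const, Nat.card_Icc, add_tsub_cancel_right, nsmul_eq_mul]; ring
    _ < L * L ^ (n - 1) := by gcongr
    _ = L ^ n := by rw [← _root_.pow_succ']; congr 1; omega

/-- **Positivity of the bracketed coefficient in the proof of Theorem 1.1.**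
If `1 ≤ h`, `0 ≤ n ≤ h` and `log X ≥ h³·e^{γ+1}`, then the complex number
`(log X)^n + Σ_{t=1}^{n} (n!/(n-t)!)·(log X)^{n-t}·S_t` is a positive real number. -/
theorem bracket_positive (h n : ℕ) (hh : 1 ≤ h) (hn : n ≤ h) (X : ℝ)
    (hX : (h : ℝ) ^ 3 * Real.exp (Real.eulerMascheroniConstant + 1) ≤ Real.log X) :
    ((Real.log X : ℂ) ^ n +
        ∑ t ∈ Finset.Icc 1 n,
          ((n.factorial : ℂ) / ((n - t).factorial : ℂ)) * (Real.log X : ℂ) ^ (n - t) * St t).im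
        = 0 ∧
    0 < ((Real.log X : ℂ) ^ n +
        ∑ t ∈ Finset.Icc 1 n,
          ((n.factorial : ℂ) / ((n - t).factorial : ℂ)) * (Real.log X : ℂ) ^ (n - t) * St t).re := by
  set L := Real.log X
  have hreal : (L : ℂ) ^ n + ∑ t ∈ Icc 1 n, ((n ! : ℂ) / (n - t)!) * (L : ℂ) ^ (n - t) * St t =
      ((L ^ n + ∑ t ∈ Icc 1 n, ((n ! : ℝ) / (n - t)!) * L ^ (n - t) * realSt t : ℝ) : ℂ) := by
    simp only [St_eq_ofReal_realSt]
    push_cast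
    rfl
  have hL : (n : ℝ) ^ 2 * exp 1 < L := by
    have he : exp 1 < exp (eulerMascheroniConstant + 1) := by
      gcongr
      linarith [one_half_lt_eulerMascheroniConstant]
    have hnh : (n : ℝ) ^ 2 ≤ h ^ 3 := by
      exact_mod_cast (Nat.pow_le_pow_left hn 2).trans (Nat.pow_le_pow_right hh (by norm_num))
    calc (n : ℝ) ^ 2 * exp 1 ≤ h ^ 3 * exp 1 := by gcongr
      _ < h ^ 3 * exp (eulerMascheroniConstant + 1) := by gcongr
      _ ≤ L := hX
  have hsum := abs_lt.mp (abs_sum_factorial_div_mul_pow_mul_lt abs_realSt_le hL)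
  rw [hreal, Complex.ofReal_im, Complex.ofReal_re]
  exact ⟨rfl, by linarith⟩
end

section
/- For an odd positive integer n and an integer k, define G_k(n) = ((1−i)/2 + (−1/n)·(1+i)/2) · Σ_{a mod n} (a/n)·e(ak/n), where (a/n) is the Jacobi symbol, (−1/n) = (−1)^{(n−1)/2}, e(x) = e^{2πix}, and the sum is over residues a modulo n. Then for any two coprime odd positive integers m and n and any integer k, G_k(mn) = G_k(m)·G_k(n). -/
open Finset

/-- The Gauss-type sum
`G_k(n) = ((1-i)/2 + (−1/n)(1+i)/2) · Σ_{a mod n} (a/n) e(ak/n)`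
from Soundararajan's work, where `(·/n)` is the Jacobi symbol and `e(x) = e^{2πix}`. -/
noncomputable def Gk (k : ℤ) (n : ℕ) : ℂ :=
  ((1 - Complex.I) / 2 + (jacobiSym (-1) n : ℂ) * (1 + Complex.I) / 2) *
    ∑ a ∈ Finset.range n,
      (jacobiSym (a : ℤ) n : ℂ) * Complex.exp (2 * Real.pi * Complex.I * a * k / n)

/-! The map `(b, c) ↦ b n + c m` is a bijection `ℤ/m × ℤ/n → ℤ/mn` for coprime `m, n`, and it
factors the summand of the sum over `ℤ/mn`: the exponential splits as `e(bk/m) e(ck/n)` and the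
Jacobi symbol as `(n/m)(b/m) · (m/n)(c/n)`. Hence the sum for `mn` is `(n/m)(m/n)` times the
product of the sums for `m` and `n`. By quadratic reciprocity `(n/m)(m/n) = -1` exactly when
`m ≡ n ≡ 3 (mod 4)`, and the prefactor, which is `1` for `n ≡ 1` and `i` for `n ≡ 3 (mod 4)`,
absorbs that sign since `i · i = -1`. -/

open Complex

lemma Nat.eq_of_mul_add_mul_modEq {m n b b' c c' : ℕ} (hmn : m.Coprime n) (hb : b < m)
    (hb' : b' < m) (h : b * n + c * m ≡ b' * n + c' * m [MOD m * n]) : b = b' := by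
  have hmod_m : b * n ≡ b' * n [MOD m] := by
    simpa [Nat.ModEq, Nat.add_mul_mod_self_right] using h.of_mul_right n
  exact (Nat.ModEq.cancel_right_of_coprime hmn hmod_m).eq_of_lt_of_lt hb hb'

theorem Finset.sum_range_mul_eq_sum_sum_of_coprime {M : Type*} [AddCommMonoid M] {m n : ℕ}
    (hmn : m.Coprime n) {f : ℕ → M} (hf : Function.Periodic f (m * n)) :
    ∑ a ∈ range (m * n), f a = ∑ b ∈ range m, ∑ c ∈ range n, f (b * n + c * m) := by
  set i : ℕ × ℕ → ℕ := fun p => (p.1 * n + p.2 * m) % (m * n)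
  have hmaps : ∀ p ∈ range m ×ˢ range n, i p ∈ range (m * n) := by
    rintro ⟨b, c⟩ hp
    rw [mem_product, mem_range, mem_range] at hp
    exact mem_range.mpr (Nat.mod_lt _ (Nat.mul_pos (by omega) (by omega)))
  have hinj : Set.InjOn i (range m ×ˢ range n : Finset (ℕ × ℕ)) := by
    rintro ⟨b, c⟩ hp ⟨b', c'⟩ hp' h
    simp only [coe_product, coe_range, Set.mem_prod, Set.mem_Iio] at hp hp'
    have hmod : b * n + c * m ≡ b' * n + c' * m [MOD m * n] := h
    have hb := Nat.eq_of_mul_add_mul_modEq hmn hp.1 hp'.1 hmod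
    have hc := Nat.eq_of_mul_add_mul_modEq hmn.symm hp.2 hp'.2 <| by
      rwa [mul_comm n m, add_comm (c * m), add_comm (c' * m)]
    rw [hb, hc]
  rw [← sum_product']
  exact (sum_nbij i hmaps hinj (surjOn_of_injOn_of_card_le i hmaps hinj (by simp))
    fun p _ => (hf.map_mod_nat _).symm).symm

noncomputable def gaussFactor (n : ℕ) : ℂ :=
  (1 - I) / 2 + (jacobiSym (-1) n : ℂ) * (1 + I) / 2

noncomputable def jacobiTerm (k : ℤ) (n a : ℕ) : ℂ :=
  (jacobiSym (a : ℤ) n : ℂ) * exp (2 * Real.pi * I * a * k / n)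

lemma Gk_eq_gaussFactor_mul_sum (k : ℤ) (n : ℕ) :
    Gk k n = gaussFactor n * ∑ a ∈ range n, jacobiTerm k n a :=
  rfl

lemma jacobiTerm_periodic (k : ℤ) (n : ℕ) : Function.Periodic (jacobiTerm k n) n := by
  intro a
  rcases eq_or_ne n 0 with rfl | hn
  · rfl
  have hnC : (n : ℂ) ≠ 0 := Nat.cast_ne_zero.mpr hn
  have hjac : jacobiSym ((a + n : ℕ) : ℤ) n = jacobiSym a n :=
    jacobiSym.mod_left' (by push_cast; exact Int.add_emod_right _ _)
  have harg : 2 * Real.pi * I * ((a + n : ℕ) : ℂ) * k / n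
      = 2 * Real.pi * I * a * k / n + k * (2 * Real.pi * I) := by
    push_cast; field_simp
  rw [jacobiTerm, jacobiTerm, hjac, harg, exp_add, exp_int_mul_two_pi_mul_I, mul_one]

lemma jacobiTerm_mul_add_mul (k : ℤ) {m n : ℕ} [NeZero m] [NeZero n] (b c : ℕ) :
    jacobiTerm k (m * n) (b * n + c * m) =
      ((jacobiSym n m * jacobiSym m n : ℤ) : ℂ) * (jacobiTerm k m b * jacobiTerm k n c) := by
  have hjac_m : jacobiSym ((b * n + c * m : ℕ) : ℤ) m = jacobiSym n m * jacobiSym b m := by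
    rw [jacobiSym.mod_left' (a₂ := b * n) (by push_cast; simp), mul_comm, jacobiSym.mul_left]
  have hjac_n : jacobiSym ((b * n + c * m : ℕ) : ℤ) n = jacobiSym m n * jacobiSym c n := by
    rw [jacobiSym.mod_left' (a₂ := c * m) (by push_cast; simp), mul_comm, jacobiSym.mul_left]
  have hexp : exp (2 * Real.pi * I * ((b * n + c * m : ℕ) : ℂ) * k / ((m * n : ℕ) : ℂ))
      = exp (2 * Real.pi * I * b * k / m) * exp (2 * Real.pi * I * c * k / n) := by
    have hmC : (m : ℂ) ≠ 0 := NeZero.ne _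
    have hnC : (n : ℂ) ≠ 0 := NeZero.ne _
    rw [← exp_add]
    congr 1
    push_cast
    field_simp
  rw [jacobiTerm, jacobiTerm, jacobiTerm, jacobiSym.mul_right, hjac_m, hjac_n, hexp]
  push_cast
  ring

lemma sum_jacobiTerm_mul {m n : ℕ} [NeZero m] [NeZero n] (hmn : m.Coprime n) (k : ℤ) :
    ∑ a ∈ range (m * n), jacobiTerm k (m * n) a =
      ((jacobiSym n m * jacobiSym m n : ℤ) : ℂ) *
        ((∑ b ∈ range m, jacobiTerm k m b) * ∑ c ∈ range n, jacobiTerm k n c) := by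
  rw [sum_range_mul_eq_sum_sum_of_coprime hmn (jacobiTerm_periodic k _), sum_mul_sum, mul_sum]
  simp_rw [jacobiTerm_mul_add_mul, mul_sum]

lemma jacobiSym_mul_jacobiSym_eq_qrSign {m n : ℕ} (hm : Odd m) (hn : Odd n)
    (hmn : m.Coprime n) : jacobiSym n m * jacobiSym m n = qrSign m n := by
  rw [jacobiSym.quadratic_reciprocity' hn hm, mul_assoc, ← sq,
    jacobiSym.sq_one (by rwa [Int.gcd_natCast_natCast]), mul_one]

lemma gaussFactor_mul_mul_qrSign {m n : ℕ} (hm : Odd m) (hn : Odd n) :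
    gaussFactor (m * n) * qrSign m n = gaussFactor m * gaussFactor n := by
  rw [gaussFactor, gaussFactor, gaussFactor, qrSign, jacobiSym.at_neg_one hm,
    jacobiSym.at_neg_one hn, jacobiSym.at_neg_one (hm.mul hn), Nat.cast_mul, map_mul]
  rcases Nat.odd_mod_four_iff.mp (Nat.odd_iff.mp hm) with hm4 | hm4 <;>
  rcases Nat.odd_mod_four_iff.mp (Nat.odd_iff.mp hn) with hn4 | hn4 <;>
  simp only [ZMod.χ₄_nat_one_mod_four, ZMod.χ₄_nat_three_mod_four, hm4, hn4,
    jacobiSym.one_left, jacobiSym.at_neg_one hn] <;> push_cast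
  · ring
  · ring
  · ring
  · linear_combination -I_sq

theorem Gk_mul_general (m n : ℕ) (hm : Odd m) (hn : Odd n)
    (hmn : Nat.Coprime m n) (k : ℤ) :
    Gk k (m * n) = Gk k m * Gk k n := by
  have : NeZero m := ⟨hm.pos.ne'⟩
  have : NeZero n := ⟨hn.pos.ne'⟩
  rw [Gk_eq_gaussFactor_mul_sum, Gk_eq_gaussFactor_mul_sum, Gk_eq_gaussFactor_mul_sum,
    sum_jacobiTerm_mul hmn, jacobiSym_mul_jacobiSym_eq_qrSign hm hn hmn,
    ← mul_assoc, gaussFactor_mul_mul_qrSign hm hn]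
  ring

/-- **Multiplicativity of `G_k`:** for coprime odd positive integers `m, n`,
`G_k(mn) = G_k(m)·G_k(n)`. -/
theorem Gk_mul (m n : ℕ) (hm : Odd m) (hm0 : 0 < m) (hn : Odd n) (hn0 : 0 < n)
    (hmn : Nat.Coprime m n) (k : ℤ) :
    Gk k (m * n) = Gk k m * Gk k n :=
  Gk_mul_general m n hm hn hmn k
end

section
/- Let B = Σ_{m,n ≥ 0} b_{m,n}·α^m·β^n be a formal power series in two variables α, β over ℂ, and let A = (α + β)·(α − β)·B, with coefficients A = Σ_{m,n ≥ 0} c_{m,n}·α^m·β^n. Then for all nonnegative integers l₁ and l₂: l₁!·l₂!·b_{l₁,l₂} = Σ_{n=0}^{l₂} Σ_{k=0}^{n} Σ_{m=0}^{l₁} binom(l₂,n)·binom(n,k)·binom(l₁,m)·(−1)^{l₁+l₂−n−m} · [(n−k)!·(l₂−n)!·(l₁+l₂+2−k)!·k!] / [(l₂−k+1)!·(l₁+l₂+2−k−m)] · c_{l₁+l₂+2−k, k}. -/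
open Finset MvPowerSeries

open Finset

lemma lemA (L x : ℕ) :
    ∑ m ∈ Finset.range (L + 1), (-1 : ℂ) ^ m * (L.choose m) / (x + 1 + m) =
      (L.factorial : ℂ) * (x.factorial) / ((x + 1 + L).factorial) := by
  induction L generalizing x with
  | zero =>
    have h1 : ((x : ℂ) + 1) ≠ 0 := by
      exact_mod_cast (Nat.cast_ne_zero (R := ℂ)).mpr (show x + 1 ≠ 0 by omega)
    have h2 : ((x.factorial : ℂ)) ≠ 0 := Nat.cast_ne_zero.2 (Nat.factorial_ne_zero _)
    rw [Finset.sum_range_one]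
    simp [Nat.factorial_succ]
    field_simp
  | succ L ih =>
    have key : ∀ m ∈ Finset.range (L + 2),
        (-1 : ℂ) ^ m * ((L+1).choose m) / (x + 1 + m) =
        (-1 : ℂ) ^ m * (L.choose m) / (x + 1 + m)
          + (if m = 0 then 0 else (-1 : ℂ) ^ m * (L.choose (m-1)) / (x + 1 + m)) := by
      intro m _
      rcases m with _ | m
      · simp
      · rw [Nat.choose_succ_succ', if_neg (Nat.succ_ne_zero m)]
        push_cast
        ring
    rw [Finset.sum_congr rfl key, Finset.sum_add_distrib]
    have hh1 : ∑ m ∈ Finset.range (L + 2), (-1 : ℂ) ^ m * (L.choose m) / (x + 1 + m)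
        = (L.factorial : ℂ) * (x.factorial) / ((x + 1 + L).factorial) := by
      rw [Finset.sum_range_succ, Nat.choose_succ_self]
      simpa using ih x
    have hh2 : ∑ m ∈ Finset.range (L + 2),
          (if m = 0 then 0 else (-1 : ℂ) ^ m * (L.choose (m-1)) / (x + 1 + m))
        = -((L.factorial : ℂ) * ((x+1).factorial) / ((x + 1 + 1 + L).factorial)) := by
      rw [Finset.sum_range_succ']
      simp only [if_neg (Nat.succ_ne_zero _), Nat.add_sub_cancel, if_pos rfl, add_zero]
      have := ih (x + 1)
      push_cast at this ⊢
      rw [show ∑ i ∈ Finset.range (L+1), (-1:ℂ)^(i+1) * (L.choose i) / (↑x + 1 + (↑i+1))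
          = -∑ i ∈ Finset.range (L+1), (-1:ℂ)^i * (L.choose i) / ((↑x+1) + 1 + ↑i) by
        rw [← Finset.sum_neg_distrib]
        refine Finset.sum_congr rfl fun i _ => by ring]
      rw [this]
      ring
    rw [hh1, hh2, show x + 1 + 1 + L = x + 1 + L + 1 from by omega]
    have hP : ((x + 1 + L).factorial : ℂ) ≠ 0 := Nat.cast_ne_zero.2 (Nat.factorial_ne_zero _)
    have e1 : ((x+1+L+1).factorial : ℂ) = ((x+1+L).factorial : ℂ) * ((x:ℂ)+1+L+1) := by
      rw [Nat.factorial_succ]; push_cast; ring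
    have e2 : ((x+1).factorial : ℂ) = (x.factorial : ℂ) * ((x:ℂ)+1) := by
      rw [Nat.factorial_succ]; push_cast; ring
    have e3 : ((L+1).factorial : ℂ) = (L.factorial : ℂ) * ((L:ℂ)+1) := by
      rw [Nat.factorial_succ]; push_cast; ring
    rw [show x + 1 + (L+1) = x + 1 + L + 1 from by omega, e1, e2, e3]
    have hQ : ((x:ℂ)+1+L+1) ≠ 0 := by
      exact_mod_cast (Nat.cast_ne_zero (R := ℂ)).mpr (show x + 1 + L + 1 ≠ 0 by omega)
    set p := ((x+1+L).factorial : ℂ) with hpdef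
    field_simp
    ring

lemma msum (l₁ l₂ k : ℕ) (hk : k ≤ l₂) :
    ∑ m ∈ Finset.range (l₁ + 1),
        (l₁.choose m : ℂ) * (-1 : ℂ) ^ (l₁ - m) / ((l₁ + l₂ + 2 - k - m : ℕ) : ℂ) =
      (l₁.factorial : ℂ) * ((l₂ + 1 - k).factorial : ℂ) / ((l₁ + l₂ + 2 - k).factorial : ℂ) := by
  rw [show l₁ + l₂ + 2 - k = (l₂ + 1 - k) + 1 + l₁ from by omega, ← lemA l₁ (l₂ + 1 - k),
    ← Finset.sum_range_reflect
      (fun j => (-1 : ℂ) ^ j * (l₁.choose j) / (((l₂ + 1 - k : ℕ) : ℂ) + 1 + j)) (l₁ + 1)]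
  refine Finset.sum_congr rfl fun m hm => ?_
  rw [Finset.mem_range] at hm
  have e1 : l₁ + 1 - 1 - m = l₁ - m := by omega
  have e2 : ((l₁ + l₂ + 2 - k - m : ℕ) : ℂ) = ((l₂ + 1 - k : ℕ) : ℂ) + 1 + ((l₁ - m : ℕ) : ℂ) := by
    rw [show ((l₂ + 1 - k : ℕ) : ℂ) + 1 + ((l₁ - m : ℕ) : ℂ)
        = (((l₂ + 1 - k) + 1 + (l₁ - m) : ℕ) : ℂ) from by push_cast; ring]
    congr 1
    omega
  simp only [e1]
  rw [Nat.choose_symm (by omega : m ≤ l₁)]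
  rw [show l₁ + l₂ + 2 - k - m = (l₂ + 1 - k) + 1 + l₁ - m from by omega] at e2
  rw [e2]
  ring


lemma coeffA (B : MvPowerSeries (Fin 2) ℂ) (a k : ℕ) (ha : 2 ≤ a) :
    MvPowerSeries.coeff (Finsupp.single (0 : Fin 2) a + Finsupp.single 1 k)
        ((MvPowerSeries.X 0 + MvPowerSeries.X 1) * (MvPowerSeries.X 0 - MvPowerSeries.X 1) * B)
      = MvPowerSeries.coeff (Finsupp.single (0 : Fin 2) (a - 2) + Finsupp.single 1 k) B
        - (if 2 ≤ k then
            MvPowerSeries.coeff (Finsupp.single (0 : Fin 2) a + Finsupp.single 1 (k - 2)) B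
          else 0) := by
  have hXX : (MvPowerSeries.X (0 : Fin 2) + MvPowerSeries.X 1) *
      (MvPowerSeries.X 0 - MvPowerSeries.X 1) * B
      = (MvPowerSeries.monomial (Finsupp.single (0 : Fin 2) 2) 1) * B
        - (MvPowerSeries.monomial (Finsupp.single (1 : Fin 2) 2) 1) * B := by
    rw [← MvPowerSeries.X_pow_eq, ← MvPowerSeries.X_pow_eq]
    ring
  rw [hXX, map_sub, MvPowerSeries.coeff_monomial_mul, MvPowerSeries.coeff_monomial_mul]
  have hle0 : Finsupp.single (0 : Fin 2) 2 ≤ Finsupp.single (0 : Fin 2) a + Finsupp.single 1 k := by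
    rw [Finsupp.single_le_iff]
    simp [Finsupp.single_apply, ha]
  have hsub0 : (Finsupp.single (0 : Fin 2) a + Finsupp.single 1 k) - Finsupp.single 0 2
      = Finsupp.single (0 : Fin 2) (a - 2) + Finsupp.single 1 k := by
    ext i
    fin_cases i <;> simp [Finsupp.single_apply]
  rw [if_pos hle0, hsub0, one_mul]
  congr 1
  by_cases hk : 2 ≤ k
  · have hle1 : Finsupp.single (1 : Fin 2) 2 ≤ Finsupp.single (0 : Fin 2) a + Finsupp.single 1 k := by
      rw [Finsupp.single_le_iff]
      simp [Finsupp.single_apply, hk]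
    have hsub1 : (Finsupp.single (0 : Fin 2) a + Finsupp.single 1 k) - Finsupp.single 1 2
        = Finsupp.single (0 : Fin 2) a + Finsupp.single 1 (k - 2) := by
      ext i
      fin_cases i <;> simp [Finsupp.single_apply]
    rw [if_pos hle1, hsub1, if_pos hk, one_mul]
  · have hle1 : ¬ Finsupp.single (1 : Fin 2) 2 ≤ Finsupp.single (0 : Fin 2) a + Finsupp.single 1 k := by
      rw [Finsupp.single_le_iff]
      simp [Finsupp.single_apply]
      omega
    rw [if_neg hle1, if_neg hk]

open Finset

lemma telesc (c : ℕ → ℂ) : ∀ N : ℕ,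
    ∑ k ∈ Finset.range (N + 1), (if Even (N - k) then (1:ℂ) else 0) *
      (c k - if 2 ≤ k then c (k - 2) else 0) = c N := by
  intro N
  induction N using Nat.strong_induction_on with
  | _ N ih =>
    match N with
    | 0 => simp
    | 1 =>
      rw [Finset.sum_range_succ, Finset.sum_range_one]
      norm_num
    | (N + 2) =>
      rw [Finset.sum_range_succ, Finset.sum_range_succ]
      have h1 : ∑ k ∈ Finset.range (N + 1), (if Even (N + 2 - k) then (1:ℂ) else 0) *
          (c k - if 2 ≤ k then c (k - 2) else 0)
          = ∑ k ∈ Finset.range (N + 1), (if Even (N - k) then (1:ℂ) else 0) *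
          (c k - if 2 ≤ k then c (k - 2) else 0) := by
        refine Finset.sum_congr rfl fun k hk => ?_
        rw [Finset.mem_range] at hk
        congr 1
        have : N + 2 - k = (N - k) + 2 := by omega
        rw [this]
        simp [Nat.even_add]
      rw [h1, ih N (by omega)]
      have h2 : ¬ Even (N + 2 - (N + 1)) := by
        rw [show N + 2 - (N+1) = 1 from by omega]; decide
      have h3 : Even (N + 2 - (N + 2)) := by simp
      rw [if_neg h2, if_pos h3, if_pos (show 2 ≤ N + 2 by omega)]
      simp
lemma parity (M : ℕ) :
    ∑ i ∈ Finset.range (M + 1), (-1 : ℂ) ^ (M - i) = if Even M then 1 else 0 := by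
  rw [← Finset.sum_range_reflect]
  have : ∀ i ∈ Finset.range (M + 1), (-1:ℂ) ^ (M - (M + 1 - 1 - i)) = (-1:ℂ)^i := by
    intro i hi
    rw [Finset.mem_range] at hi
    congr 1
    omega
  rw [Finset.sum_congr rfl this, neg_one_geom_sum]
  by_cases h : Even M
  · rw [if_pos h, if_neg (by simpa [Nat.even_add_one] using h)]
  · rw [if_neg h, if_pos (by simpa [Nat.even_add_one] using h)]


/-- **Coefficient extraction (Lemma 2.3 of Sono).**
Let `B` be a formal power series in two variables `α = X 0`, `β = X 1` over `ℂ`, and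
let `A = (α + β)(α − β)·B` with coefficients `c_{m,n}`.  Then
`l₁!·l₂!·b_{l₁,l₂}` equals the triple sum of the statement, i.e. the iterated partial
derivative `∂^{l₁+l₂}/∂α^{l₁}∂β^{l₂}` of `A(α,β)/((α+β)(α−β))` at `α = β = 0`. -/
theorem coeff_div_alpha_beta (B : MvPowerSeries (Fin 2) ℂ) (l₁ l₂ : ℕ) :
    (l₁.factorial : ℂ) * (l₂.factorial : ℂ) *
        MvPowerSeries.coeff (Finsupp.single (0 : Fin 2) l₁ + Finsupp.single 1 l₂) B =
      ∑ n ∈ Finset.range (l₂ + 1), ∑ k ∈ Finset.range (n + 1), ∑ m ∈ Finset.range (l₁ + 1),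
        (l₂.choose n : ℂ) * (n.choose k : ℂ) * (l₁.choose m : ℂ) *
          (-1 : ℂ) ^ (l₁ + l₂ - n - m) *
          (((n - k).factorial : ℂ) * ((l₂ - n).factorial : ℂ) *
            ((l₁ + l₂ + 2 - k).factorial : ℂ) * (k.factorial : ℂ)) /
          (((l₂ - k + 1).factorial : ℂ) * ((l₁ + l₂ + 2 - k - m : ℕ) : ℂ)) *
          MvPowerSeries.coeff
            (Finsupp.single (0 : Fin 2) (l₁ + l₂ + 2 - k) + Finsupp.single 1 k)
            ((MvPowerSeries.X 0 + MvPowerSeries.X 1) *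
              (MvPowerSeries.X 0 - MvPowerSeries.X 1) * B) := by
  classical
  set a : ℕ → ℂ := fun k => MvPowerSeries.coeff
      (Finsupp.single (0 : Fin 2) (l₁ + l₂ + 2 - k) + Finsupp.single 1 k)
      ((MvPowerSeries.X 0 + MvPowerSeries.X 1) *
        (MvPowerSeries.X 0 - MvPowerSeries.X 1) * B) with ha
  set c : ℕ → ℂ := fun j => MvPowerSeries.coeff
      (Finsupp.single (0 : Fin 2) (l₁ + l₂ - j) + Finsupp.single 1 j) B with hc
  -- Step 1: collapse the m-sum
  have hsum1 : ∀ n ∈ Finset.range (l₂ + 1), ∀ k ∈ Finset.range (n + 1),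
      ∑ m ∈ Finset.range (l₁ + 1),
        (l₂.choose n : ℂ) * (n.choose k : ℂ) * (l₁.choose m : ℂ) *
          (-1 : ℂ) ^ (l₁ + l₂ - n - m) *
          (((n - k).factorial : ℂ) * ((l₂ - n).factorial : ℂ) *
            ((l₁ + l₂ + 2 - k).factorial : ℂ) * (k.factorial : ℂ)) /
          (((l₂ - k + 1).factorial : ℂ) * ((l₁ + l₂ + 2 - k - m : ℕ) : ℂ)) * a k
      = (-1 : ℂ) ^ (l₂ - n) * (l₁.factorial : ℂ) * (l₂.factorial : ℂ) * a k := by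
    intro n hn k hk
    rw [Finset.mem_range] at hn hk
    have hkn : k ≤ n := by omega
    have hnl : n ≤ l₂ := by omega
    have hterm : ∀ m ∈ Finset.range (l₁ + 1),
        (l₂.choose n : ℂ) * (n.choose k : ℂ) * (l₁.choose m : ℂ) *
          (-1 : ℂ) ^ (l₁ + l₂ - n - m) *
          (((n - k).factorial : ℂ) * ((l₂ - n).factorial : ℂ) *
            ((l₁ + l₂ + 2 - k).factorial : ℂ) * (k.factorial : ℂ)) /
          (((l₂ - k + 1).factorial : ℂ) * ((l₁ + l₂ + 2 - k - m : ℕ) : ℂ)) * a k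
        = ((l₂.choose n : ℂ) * (n.choose k : ℂ) * (-1 : ℂ) ^ (l₂ - n) *
            (((n - k).factorial : ℂ) * ((l₂ - n).factorial : ℂ) *
              ((l₁ + l₂ + 2 - k).factorial : ℂ) * (k.factorial : ℂ)) /
            ((l₂ - k + 1).factorial : ℂ) * a k) *
          ((l₁.choose m : ℂ) * (-1 : ℂ) ^ (l₁ - m) / ((l₁ + l₂ + 2 - k - m : ℕ) : ℂ)) := by
      intro m hm
      rw [Finset.mem_range] at hm
      rw [show l₁ + l₂ - n - m = (l₂ - n) + (l₁ - m) from by omega, pow_add]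
      ring
    rw [Finset.sum_congr rfl hterm, ← Finset.mul_sum, msum l₁ l₂ k (by omega)]
    have hkey : (l₂.choose n : ℂ) * (n.choose k : ℂ) *
        (((n - k).factorial : ℂ) * ((l₂ - n).factorial : ℂ) * (k.factorial : ℂ))
        = (l₂.factorial : ℂ) := by
      have h1 := Nat.choose_mul_factorial_mul_factorial hkn
      have h2 := Nat.choose_mul_factorial_mul_factorial hnl
      have : l₂.choose n * n.choose k *
          ((n - k).factorial * ((l₂ - n).factorial * k.factorial)) = l₂.factorial := by
        calc l₂.choose n * n.choose k *
            ((n - k).factorial * ((l₂ - n).factorial * k.factorial))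
            = l₂.choose n * (n.choose k * k.factorial * (n - k).factorial) *
              (l₂ - n).factorial := by ring
          _ = l₂.choose n * n.factorial * (l₂ - n).factorial := by rw [h1]
          _ = l₂.factorial := h2
      rw [← this]; push_cast; ring
    have hne1 : (((l₂ - k + 1).factorial : ℕ) : ℂ) ≠ 0 :=
      Nat.cast_ne_zero.2 (Nat.factorial_ne_zero _)
    have hne2 : (((l₁ + l₂ + 2 - k).factorial : ℕ) : ℂ) ≠ 0 :=
      Nat.cast_ne_zero.2 (Nat.factorial_ne_zero _)
    rw [show l₂ + 1 - k = l₂ - k + 1 from by omega]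
    field_simp
    linear_combination (a k * (l₁.factorial : ℂ)) * hkey
  rw [Finset.sum_congr rfl (fun n hn => Finset.sum_congr rfl (hsum1 n hn))]
  -- Step 2: swap the order of summation
  have hswap := Finset.sum_Ico_Ico_comm 0 (l₂ + 1)
    (fun k n => (-1 : ℂ) ^ (l₂ - n) * (l₁.factorial : ℂ) * (l₂.factorial : ℂ) * a k)
  simp only [Nat.Ico_zero_eq_range] at hswap
  rw [← hswap]
  -- Step 3: evaluate the inner n-sum
  have hstep3 : ∀ k ∈ Finset.range (l₂ + 1),
      ∑ n ∈ Finset.Ico k (l₂ + 1),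
        (-1 : ℂ) ^ (l₂ - n) * (l₁.factorial : ℂ) * (l₂.factorial : ℂ) * a k
      = (l₁.factorial : ℂ) * (l₂.factorial : ℂ) *
          ((if Even (l₂ - k) then (1:ℂ) else 0) * (c k - if 2 ≤ k then c (k - 2) else 0)) := by
    intro k hk
    rw [Finset.mem_range] at hk
    have hkl : k ≤ l₂ := by omega
    have hE : ∑ n ∈ Finset.Ico k (l₂ + 1), (-1 : ℂ) ^ (l₂ - n)
        = if Even (l₂ - k) then (1:ℂ) else 0 := by
      rw [Finset.sum_Ico_eq_sum_range, show l₂ + 1 - k = (l₂ - k) + 1 from by omega,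
        ← parity (l₂ - k)]
      refine Finset.sum_congr rfl fun i hi => ?_
      rw [Finset.mem_range] at hi
      congr 1
      omega
    have hak : a k = c k - (if 2 ≤ k then c (k - 2) else 0) := by
      rw [ha, hc]
      simp only
      rw [coeffA B (l₁ + l₂ + 2 - k) k (by omega),
        show l₁ + l₂ + 2 - k - 2 = l₁ + l₂ - k from by omega]
      congr 1
      split_ifs with h
      · rw [show l₁ + l₂ + 2 - k = l₁ + l₂ - (k - 2) from by omega]
      · rfl
    calc ∑ n ∈ Finset.Ico k (l₂ + 1),
          (-1 : ℂ) ^ (l₂ - n) * (l₁.factorial : ℂ) * (l₂.factorial : ℂ) * a k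
        = (∑ n ∈ Finset.Ico k (l₂ + 1), (-1 : ℂ) ^ (l₂ - n)) *
            ((l₁.factorial : ℂ) * (l₂.factorial : ℂ) * a k) := by
          rw [Finset.sum_mul]
          exact Finset.sum_congr rfl fun n _ => by ring
      _ = _ := by rw [hE, hak]; ring
  rw [Finset.sum_congr rfl hstep3, ← Finset.mul_sum, telesc c l₂]
  rw [hc]
  simp only [Nat.add_sub_cancel]
end
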